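/- arXiv:1012.1163 — 8 statements merged into one kernel-verified Lean document; each statement's English description precedes it below -/
import Mathlib

section
/- Let n be a positive integer, let a_1, ..., a_n be objects with weights w_i = 2^i and nonnegative single profits p_1, ..., p_n ≥ 0, and let b be an additional object with weight 2^{n+1} and profit q satisfying q > p_1 + ... + p_n. Let P denote the Pareto set of the bi-criteria knapsack problem K({a_1,...,a_n}) with solution set {0,1}^n, and let P' denote the Pareto set of K({a_1,...,a_n,b}) with solution set {0,1}^{n+1}. Then P' is the disjoint union of P'_0 := {(s,0) : s ∈ P} and P'_1 := {(s,1) : s ∈ P}, and consequently |P'| = 2·|P|. -/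
open MeasureTheory Finset

/-- Total weight (or total profit) of a 0-1 solution `s`. -/
def totalVal {ι : Type*} [Fintype ι] (w : ι → ℝ) (s : ι → Bool) : ℝ :=
  ∑ i, if s i then w i else 0

/-- `s'` dominates `s`: it is no heavier, has no smaller profit, and is strictly
better in at least one of the two criteria. -/
def dominates {ι : Type*} [Fintype ι] (w p : ι → ℝ) (s' s : ι → Bool) : Prop :=
  totalVal w s' ≤ totalVal w s ∧ totalVal p s ≤ totalVal p s' ∧
    (totalVal w s' < totalVal w s ∨ totalVal p s < totalVal p s')

/-- Pareto set of the bi-criteria knapsack problem with solution set `S`,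
weights `w` and profits `p`. -/
def paretoSet {ι : Type*} [Fintype ι] (S : Set (ι → Bool)) (w p : ι → ℝ) :
    Set (ι → Bool) :=
  {s ∈ S | ∀ s' ∈ S, ¬ dominates w p s' s}

lemma totalVal_snoc {n : ℕ} (w : Fin n → ℝ) (c : ℝ) (s : Fin n → Bool) (b : Bool) :
    totalVal (Fin.snoc w c) (Fin.snoc s b) = totalVal w s + (if b then c else 0) := by
  simp [totalVal, Fin.sum_univ_castSucc]

lemma totalVal_nonneg {n : ℕ} {p : Fin n → ℝ} (hp : ∀ i, 0 ≤ p i) (s : Fin n → Bool) :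
    0 ≤ totalVal p s :=
  Finset.sum_nonneg fun i _ => by by_cases h : s i <;> simp [h, hp i]

lemma totalVal_le_sum {n : ℕ} {p : Fin n → ℝ} (hp : ∀ i, 0 ≤ p i) (s : Fin n → Bool) :
    totalVal p s ≤ ∑ i, p i :=
  Finset.sum_le_sum fun i _ => by by_cases h : s i <;> simp [h, hp i]

lemma weight_lt {n : ℕ} (s : Fin n → Bool) :
    totalVal (fun i : Fin n => (2 : ℝ) ^ ((i : ℕ) + 1)) s < 2 ^ (n + 1) := by
  have h1 : totalVal (fun i : Fin n => (2 : ℝ) ^ ((i : ℕ) + 1)) s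
      ≤ ∑ i : Fin n, (2 : ℝ) ^ ((i : ℕ) + 1) :=
    totalVal_le_sum (fun i => by positivity) s
  have h2 : ∑ i : Fin n, (2 : ℝ) ^ ((i : ℕ) + 1) = 2 * ((2 : ℝ) ^ n - 1) := by
    rw [Fin.sum_univ_eq_sum_range (fun i => (2:ℝ)^(i+1))]
    have hg := geom_sum_eq (by norm_num : (2:ℝ) ≠ 1) n
    simp only [pow_succ]
    rw [← Finset.sum_mul, hg]
    ring
  have h3 : (0:ℝ) < 2 ^ n := by positivity
  have h4 : (2:ℝ) ^ (n+1) = 2 * 2 ^ n := by ring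
  linarith

lemma dominates_snoc_same {n : ℕ} (w p : Fin n → ℝ) (c q : ℝ) (t s : Fin n → Bool)
    (b : Bool) :
    dominates (Fin.snoc w c) (Fin.snoc p q) (Fin.snoc t b) (Fin.snoc s b) ↔
      dominates w p t s := by
  unfold dominates
  simp only [totalVal_snoc, add_le_add_iff_right, add_lt_add_iff_right]

/-- copy lemma. `a_1, …, a_n` have weights `2^1, …, 2^n` and
nonnegative profits `p_1, …, p_n`; the extra object `b` has weight `2^(n+1)` and
profit `q > p_1 + ⋯ + p_n`.  If `P` is the Pareto set of `K({a_1,…,a_n})` and `P'`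
the Pareto set of `K({a_1,…,a_n,b})`, then `P'` is the disjoint union of
`{(s,0) : s ∈ P}` and `{(s,1) : s ∈ P}`, so `|P'| = 2·|P|`. -/
theorem copy_lemma (n : ℕ) (hn : 0 < n) (p : Fin n → ℝ) (hp : ∀ i, 0 ≤ p i)
    (q : ℝ) (hq : ∑ i, p i < q)
    (P : Set (Fin n → Bool)) (P' : Set (Fin (n + 1) → Bool))
    (hP : P = paretoSet Set.univ (fun i : Fin n => (2 : ℝ) ^ ((i : ℕ) + 1)) p)
    (hP' : P' = paretoSet Set.univ
      (Fin.snoc (fun i : Fin n => (2 : ℝ) ^ ((i : ℕ) + 1)) ((2 : ℝ) ^ (n + 1)))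
      (Fin.snoc p q)) :
    P' = (fun s : Fin n → Bool => (Fin.snoc s false : Fin (n + 1) → Bool)) '' P ∪
        (fun s : Fin n → Bool => (Fin.snoc s true : Fin (n + 1) → Bool)) '' P ∧
    Disjoint ((fun s : Fin n → Bool => (Fin.snoc s false : Fin (n + 1) → Bool)) '' P)
        ((fun s : Fin n → Bool => (Fin.snoc s true : Fin (n + 1) → Bool)) '' P) ∧
    P'.ncard = 2 * P.ncard := by
  have key : ∀ (s : Fin n → Bool) (b : Bool), Fin.snoc s b ∈ P' ↔ s ∈ P := by
    intro s b
    rw [hP, hP']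
    constructor
    · rintro ⟨-, h⟩
      refine ⟨Set.mem_univ _, fun t _ hdom => ?_⟩
      exact h (Fin.snoc t b) (Set.mem_univ _)
        ((dominates_snoc_same _ _ _ _ _ _ _).mpr hdom)
    · rintro ⟨-, h⟩
      refine ⟨Set.mem_univ _, fun t' _ hdom => ?_⟩
      rw [← Fin.snoc_init_self t'] at hdom
      revert hdom
      generalize Fin.init t' = t
      generalize t' (Fin.last n) = c
      intro hdom
      have hws := weight_lt s
      have hwt := totalVal_nonneg
        (p := fun i : Fin n => (2 : ℝ) ^ ((i : ℕ) + 1)) (fun i => by positivity) t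
      have hps := totalVal_nonneg hp s
      have hpt := totalVal_le_sum hp t
      cases b <;> cases c
      · exact h t (Set.mem_univ _) ((dominates_snoc_same _ _ _ _ _ _ _).mp hdom)
      · obtain ⟨h1, -, -⟩ := hdom
        rw [totalVal_snoc, totalVal_snoc] at h1
        norm_num at h1
        linarith
      · obtain ⟨-, h2, -⟩ := hdom
        rw [totalVal_snoc, totalVal_snoc] at h2
        norm_num at h2
        linarith
      · exact h t (Set.mem_univ _) ((dominates_snoc_same _ _ _ _ _ _ _).mp hdom)
  have hunion : P' = (fun s : Fin n → Bool => (Fin.snoc s false : Fin (n + 1) → Bool)) '' P ∪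
      (fun s : Fin n → Bool => (Fin.snoc s true : Fin (n + 1) → Bool)) '' P := by
    ext t
    constructor
    · intro ht
      have hm : Fin.snoc (Fin.init t) (t (Fin.last n)) ∈ P' := by
        rwa [Fin.snoc_init_self]
      have hmem := (key _ _).mp hm
      cases hb : t (Fin.last n)
      · left
        refine ⟨Fin.init t, hmem, ?_⟩
        show Fin.snoc (Fin.init t) false = t
        rw [← hb]; exact Fin.snoc_init_self t
      · right
        refine ⟨Fin.init t, hmem, ?_⟩
        show Fin.snoc (Fin.init t) true = t
        rw [← hb]; exact Fin.snoc_init_self t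
    · rintro (⟨s, hs, rfl⟩ | ⟨s, hs, rfl⟩) <;> exact (key _ _).mpr hs
  have hdisj : Disjoint ((fun s : Fin n → Bool => (Fin.snoc s false : Fin (n + 1) → Bool)) '' P)
      ((fun s : Fin n → Bool => (Fin.snoc s true : Fin (n + 1) → Bool)) '' P) := by
    rw [Set.disjoint_left]
    rintro x ⟨s, -, rfl⟩ ⟨t, -, h⟩
    simpa using congrFun h (Fin.last n)
  have hinj : ∀ b : Bool, Function.Injective
      (fun s : Fin n → Bool => (Fin.snoc s b : Fin (n + 1) → Bool)) := by
    intro b a a' h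
    have := congrArg Fin.init h
    simpa using this
  have hfin : P.Finite := Set.toFinite P
  refine ⟨hunion, hdisj, ?_⟩
  rw [hunion, Set.ncard_union_eq hdisj (hfin.image _) (hfin.image _),
    Set.ncard_image_of_injective _ (hinj false), Set.ncard_image_of_injective _ (hinj true)]
  ring
end

section
/- Let φ > 1 be a real number and let n_p, n_q be positive integers. Define m_i = ((n_p+1)/(φ-1)) · ((2φ-1)/(φ-1))^{i-1} for i = 1,...,n_q. Suppose p_1,...,p_{n_p} ∈ [0, 1/φ] and q_j ∈ (m_j - ⌈m_j⌉/φ, m_j] for j = 1,...,n_q. Then for every i ∈ {1,...,n_q} it holds that q_i > Σ_{j=1}^{n_p} p_j + Σ_{j=1}^{i-1} q_j. -/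
open Finset

/-- With `m_i = ((n_p+1)/(φ-1))·((2φ-1)/(φ-1))^(i-1)`, profits
`p_j ∈ [0, 1/φ]` and `q_j ∈ (m_j - ⌈m_j⌉/φ, m_j]`, every `q_i` exceeds the sum of
all `p_j` together with all earlier `q_j`. -/
theorem q_exceeds_previous (φ : ℝ) (hφ : 1 < φ) (np nq : ℕ) (hnp : 0 < np)
    (hnq : 0 < nq) (m : ℕ → ℝ)
    (hm : ∀ i, m i = ((np + 1 : ℝ) / (φ - 1)) * ((2 * φ - 1) / (φ - 1)) ^ (i - 1))
    (p : ℕ → ℝ) (hp : ∀ j ∈ Finset.Icc 1 np, p j ∈ Set.Icc 0 (1 / φ))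
    (q : ℕ → ℝ)
    (hq : ∀ j ∈ Finset.Icc 1 nq, q j ∈ Set.Ioc (m j - (⌈m j⌉ : ℝ) / φ) (m j)) :
    ∀ i ∈ Finset.Icc 1 nq,
      (∑ j ∈ Finset.Icc 1 np, p j) + ∑ j ∈ Finset.Icc 1 (i - 1), q j < q i := by
  intro i hi
  have hi' := Finset.mem_Icc.mp hi
  obtain ⟨k, rfl⟩ : ∃ k, i = k + 1 := ⟨i - 1, (Nat.succ_pred_eq_of_pos hi'.1).symm⟩
  have hφ0 : (0:ℝ) < φ := lt_trans one_pos hφ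
  have hφ1 : (0:ℝ) < φ - 1 := by linarith
  set r : ℝ := (2*φ - 1)/(φ - 1) with hrdef
  set C : ℝ := ((np:ℝ) + 1)/(φ - 1) with hCdef
  have hr1 : r - 1 = φ / (φ - 1) := by
    rw [hrdef]; field_simp; ring
  have hrne : r ≠ 1 := by
    have : (0:ℝ) < r - 1 := hr1 ▸ div_pos hφ0 hφ1
    intro h; rw [h] at this; linarith
  -- sum of p
  have hsp : ∑ j ∈ Icc 1 np, p j ≤ (np:ℝ) * (1/φ) := by
    calc ∑ j ∈ Icc 1 np, p j ≤ ∑ _j ∈ Icc 1 np, (1/φ) :=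
          Finset.sum_le_sum fun j hj => (hp j hj).2
      _ = (np:ℝ) * (1/φ) := by simp [Nat.card_Icc]
  -- sum of q bounded by sum of m
  have hsq : ∑ j ∈ Icc 1 (k+1-1), q j ≤ ∑ j ∈ Icc 1 k, m j := by
    simp only [Nat.add_sub_cancel]
    refine Finset.sum_le_sum fun j hj => ?_
    have hj' := Finset.mem_Icc.mp hj
    exact (hq j (Finset.mem_Icc.mpr ⟨hj'.1, by omega⟩)).2
  -- geometric sum
  have hm_sum : ∀ kk : ℕ, ∑ j ∈ Icc 1 kk, m j = C * ((r^kk - 1) / (r - 1)) := by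
    have hrs : r - 1 ≠ 0 := sub_ne_zero.mpr hrne
    intro kk
    induction kk with
    | zero => simp
    | succ n ih =>
      rw [Finset.sum_Icc_succ_top (by omega), ih, hm]
      have : n + 1 - 1 = n := by omega
      rw [this]
      field_simp
      ring
  have hmi : m (k+1) = C * r^k := by
    rw [hm]; simp
  have hceil : (⌈m (k+1)⌉ : ℝ) < m (k+1) + 1 := Int.ceil_lt_add_one _
  have heq : (np:ℝ) * (1/φ) + C * ((r^k - 1)/(r-1)) = m (k+1) - (m (k+1) + 1)/φ := by
    rw [hmi, hr1, hCdef]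
    field_simp
    ring
  have hdiv : (⌈m (k+1)⌉ : ℝ)/φ < (m (k+1) + 1)/φ := by gcongr
  have hq' := (hq (k+1) hi).1
  calc (∑ j ∈ Finset.Icc 1 np, p j) + ∑ j ∈ Finset.Icc 1 (k+1-1), q j
      ≤ (np:ℝ) * (1/φ) + C * ((r^k - 1)/(r-1)) := by
        rw [← hm_sum k]; exact add_le_add hsp hsq
    _ = m (k+1) - (m (k+1) + 1)/φ := heq
    _ < m (k+1) - (⌈m (k+1)⌉ : ℝ)/φ := by linarith
    _ < q (k+1) := hq'
end

section
/- Let φ > 1 be real, n_p, n_q positive integers, and m_i = ((n_p+1)/(φ-1)) · ((2φ-1)/(φ-1))^{i-1} for i = 1,...,n_q. Let a_1,...,a_{n_p} be objects with weights 2^1,...,2^{n_p} and arbitrary profits p_i ∈ [0, 1/φ], and let b_1,...,b_{n_q} be objects with weights 2^{n_p+1},...,2^{n_p+n_q} and arbitrary profits q_i ∈ (m_i - ⌈m_i⌉/φ, m_i]. Then the Pareto set of the bi-criteria knapsack problem K({a_1,...,a_{n_p}, b_1,...,b_{n_q}}) with solution set {0,1}^{n_p+n_q} has cardinality exactly 2^{n_q}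 times the cardinality of the Pareto set of K({a_1,...,a_{n_p}}) with solution set {0,1}^{n_p}. -/
open MeasureTheory Finset

lemma totalVal_nonneg_s2 {ι : Type*} [Fintype ι] {w : ι → ℝ} (h : ∀ i, 0 ≤ w i) (s : ι → Bool) :
    0 ≤ totalVal w s :=
  Finset.sum_nonneg fun i _ => by split <;> simp [h i]

lemma totalVal_le_sum_s2 {ι : Type*} [Fintype ι] {w : ι → ℝ} (h : ∀ i, 0 ≤ w i) (s : ι → Bool) :
    totalVal w s ≤ ∑ i, w i :=
  Finset.sum_le_sum fun i _ => by split <;> simp [h i]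

lemma totalVal_append {np nq : ℕ} (w1 : Fin np → ℝ) (w2 : Fin nq → ℝ)
    (a : Fin np → Bool) (t : Fin nq → Bool) :
    totalVal (Fin.append w1 w2) (Fin.append a t) = totalVal w1 a + totalVal w2 t := by
  unfold totalVal
  rw [Fin.sum_univ_add]
  simp [Fin.append_left, Fin.append_right]

lemma sum_filter_lt_eq_range {n : ℕ} (k : Fin n) (f : ℕ → ℝ) :
    ∑ j ∈ Finset.univ.filter (fun j : Fin n => j < k), f (j : ℕ)
      = ∑ e ∈ Finset.range (k : ℕ), f e := by
  rw [Finset.sum_filter]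
  have h1 : ∀ j : Fin n, (if j < k then f (j:ℕ) else 0)
      = (fun e => if e < (k:ℕ) then f e else 0) (j:ℕ) := by
    intro j; simp only [Fin.lt_def]
  simp_rw [h1]
  rw [Fin.sum_univ_eq_sum_range (fun e => if e < (k:ℕ) then f e else 0) n,
    ← Finset.sum_filter]
  congr 1
  ext e
  simp only [Finset.mem_filter, Finset.mem_range]
  constructor
  · rintro ⟨_, h⟩; exact h
  · intro h; exact ⟨h.trans k.isLt, h⟩

lemma totalVal_sub_ge {n : ℕ} (g B : Fin n → ℝ) (t t' : Fin n → Bool) (k : Fin n)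
    (h1 : t k = true) (h2 : t' k = false) (h3 : ∀ j, k < j → t j = t' j)
    (hB : ∀ j, j < k → |g j| ≤ B j) :
    g k - ∑ j ∈ Finset.univ.filter (fun j => j < k), B j ≤ totalVal g t - totalVal g t' := by
  have hd : totalVal g t - totalVal g t'
      = ∑ j, ((if t j then g j else 0) - (if t' j then g j else 0)) := by
    unfold totalVal; rw [Finset.sum_sub_distrib]
  rw [hd]
  have hL : ∀ j ∈ Finset.univ (α := Fin n),
      (if j = k then g k else 0) + (if j < k then -B j else 0)
        ≤ (if t j then g j else 0) - (if t' j then g j else 0) := by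
    intro j _
    rcases lt_trichotomy j k with h | h | h
    · have hb := abs_le.mp (hB j h)
      have hB0 : 0 ≤ B j := le_trans (abs_nonneg _) (hB j h)
      rw [if_neg h.ne, if_pos h]
      cases ht : t j <;> cases ht' : t' j <;> simp <;> linarith [hb.1, hb.2]
    · subst h
      rw [if_pos rfl, if_neg (lt_irrefl j), h1, h2]
      simp
    · have := h3 j h
      rw [if_neg h.ne', if_neg (not_lt.mpr h.le), this]
      cases t' j <;> simp
  have := Finset.sum_le_sum hL
  refine le_trans (le_of_eq ?_) this
  rw [Finset.sum_add_distrib, Finset.sum_ite_eq' Finset.univ k (fun _ => g k)]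
  simp only [Finset.mem_univ, if_true]
  rw [← Finset.sum_filter, Finset.sum_neg_distrib]
  ring

/-- With objects `a_1,…,a_{n_p}` of weights `2^1,…,2^{n_p}` and
profits `p_i ∈ [0,1/φ]`, and objects `b_1,…,b_{n_q}` of weights
`2^{n_p+1},…,2^{n_p+n_q}` and profits `q_i ∈ (m_i - ⌈m_i⌉/φ, m_i]`, the Pareto set
of `K({a_1,…,a_{n_p},b_1,…,b_{n_q}})` has exactly `2^{n_q}` times as many elements
as the Pareto set of `K({a_1,…,a_{n_p}})`. -/
theorem pareto_card_doubling (φ : ℝ) (hφ : 1 < φ) (np nq : ℕ) (hnp : 0 < np)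
    (hnq : 0 < nq) (m : Fin nq → ℝ)
    (hm : ∀ i : Fin nq,
      m i = ((np + 1 : ℝ) / (φ - 1)) * ((2 * φ - 1) / (φ - 1)) ^ (i : ℕ))
    (p : Fin np → ℝ) (hp : ∀ i, p i ∈ Set.Icc 0 (1 / φ))
    (q : Fin nq → ℝ) (hq : ∀ i, q i ∈ Set.Ioc (m i - (⌈m i⌉ : ℝ) / φ) (m i)) :
    (paretoSet Set.univ (fun i : Fin (np + nq) => (2 : ℝ) ^ ((i : ℕ) + 1))
        (Fin.append p q)).ncard =
      2 ^ nq *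
        (paretoSet Set.univ (fun i : Fin np => (2 : ℝ) ^ ((i : ℕ) + 1)) p).ncard := by
  have hφ0 : (0:ℝ) < φ := lt_trans one_pos hφ
  have hφ1 : (0:ℝ) < φ - 1 := by linarith
  set r : ℝ := (2 * φ - 1) / (φ - 1) with hr
  have hr2 : 2 < r := by
    rw [hr, lt_div_iff₀ hφ1]; linarith
  have hr1 : r ≠ 1 := by linarith
  set C : ℝ := (np + 1 : ℝ) / (φ - 1) with hC
  have hC0 : 0 < C := by positivity
  have hCr : 1 ≤ (2 * φ - 1) * C := by
    rw [hC, mul_div_assoc']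
    rw [le_div_iff₀ hφ1]
    nlinarith [Nat.cast_nonneg (α := ℝ) np]
  have hm_pos : ∀ j : Fin nq, 0 < m j := by
    intro j; rw [hm j]; positivity
  have hm_lb : ∀ j : Fin nq, 1 ≤ (2 * φ - 1) * m j := by
    intro j
    rw [hm j]
    calc (1:ℝ) ≤ (2*φ-1) * C := hCr
    _ ≤ (2*φ-1)*C * r ^ (j:ℕ) := by
        nlinarith [one_le_pow₀ (by linarith : (1:ℝ) ≤ r) (n := (j:ℕ)), hCr]
    _ = (2*φ-1) * (C * r^(j:ℕ)) := by ring
  have hq_abs : ∀ j : Fin nq, |q j| ≤ m j := by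
    intro j
    have h1 := (hq j).1
    have h2 := (hq j).2
    have hc1 : (⌈m j⌉ : ℝ) < m j + 1 := Int.ceil_lt_add_one (m j)
    have hlb := hm_lb j
    rw [abs_le]
    constructor
    · have : (⌈m j⌉ : ℝ) / φ ≤ 2 * m j := by
        rw [div_le_iff₀ hφ0]; nlinarith
      linarith
    · exact h2
  -- geometric sum of the m's below k
  have hsum_m : ∀ k : Fin nq, ∑ j ∈ Finset.univ.filter (fun j => j < k), m j
      = ((φ - 1) * m k - (np + 1)) / φ := by
    intro k
    have h1 : ∀ j : Fin nq, m j = C * r ^ (j:ℕ) := fun j => hm j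
    simp_rw [h1]
    rw [show (∑ j ∈ Finset.univ.filter (fun j : Fin nq => j < k), C * r ^ (j:ℕ))
      = ∑ j ∈ Finset.univ.filter (fun j : Fin nq => j < k), (fun e => C * r ^ e) ((j:ℕ)) from rfl]
    rw [sum_filter_lt_eq_range k (fun e => C * r ^ e)]
    rw [← Finset.mul_sum, geom_sum_eq hr1]
    have hrm1 : r - 1 = φ / (φ - 1) := by
      rw [hr]; field_simp; ring
    rw [hrm1, hC]
    field_simp
  -- profit bounds for p
  have hP0 : ∀ a : Fin np → Bool, 0 ≤ totalVal p a :=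
    fun a => totalVal_nonneg_s2 (fun i => (hp i).1) a
  have hPle : ∀ a : Fin np → Bool, totalVal p a ≤ np / φ := by
    intro a
    refine le_trans (totalVal_le_sum_s2 (fun i => (hp i).1) a) ?_
    calc ∑ i, p i ≤ ∑ _i : Fin np, 1/φ := Finset.sum_le_sum (fun i _ => (hp i).2)
    _ = np / φ := by simp [Finset.sum_const]; ring
  -- the profit key inequality
  have profit_key : ∀ (a a' : Fin np → Bool) (t t' : Fin nq → Bool) (k : Fin nq),
      t k = true → t' k = false → (∀ j, k < j → t j = t' j) →
      totalVal p a' + totalVal q t' < totalVal p a + totalVal q t := by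
    intro a a' t t' k htk ht'k hagree
    have h1 := totalVal_sub_ge q m t t' k htk ht'k hagree (fun j _ => hq_abs j)
    rw [hsum_m k] at h1
    have hc1 : (⌈m k⌉ : ℝ) < m k + 1 := Int.ceil_lt_add_one (m k)
    have hq1 := (hq k).1
    have h2 : (np:ℝ) / φ < q k - ((φ - 1) * m k - (np + 1)) / φ := by
      rw [div_lt_iff₀ hφ0] at *
      have e1 : (m k - (⌈m k⌉:ℝ)/φ) * φ = m k * φ - ⌈m k⌉ := by field_simp
      nlinarith [mul_lt_mul_of_pos_right hq1 hφ0, sub_div ((φ-1)*m k) ((np:ℝ)+1) φ,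
        div_mul_cancel₀ ((φ-1)*m k - ((np:ℝ)+1)) (ne_of_gt hφ0)]
    have h3 := hPle a'
    have h4 := hP0 a
    linarith
  -- weights
  set wA : Fin np → ℝ := fun i => 2 ^ ((i:ℕ) + 1) with hwA
  set wB : Fin nq → ℝ := fun j => 2 ^ ((np + (j:ℕ)) + 1) with hwB
  have hWA0 : ∀ a : Fin np → Bool, 0 ≤ totalVal wA a :=
    fun a => totalVal_nonneg_s2 (fun i => by positivity) a
  have hWAle : ∀ a : Fin np → Bool, totalVal wA a ≤ 2 ^ (np+1) - 2 := by
    intro a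
    refine le_trans (totalVal_le_sum_s2 (fun i => by positivity) a) ?_
    rw [hwA, Fin.sum_univ_eq_sum_range (fun e => (2:ℝ) ^ (e+1)) np]
    have : ∀ e ∈ Finset.range np, (2:ℝ)^(e+1) = 2 * 2^e := by intro e _; ring
    rw [Finset.sum_congr rfl this, ← Finset.mul_sum, geom_sum_eq (by norm_num : (2:ℝ) ≠ 1)]
    rw [pow_succ]
    norm_num
    ring_nf
    linarith
  have weight_key : ∀ (a a' : Fin np → Bool) (t t' : Fin nq → Bool) (k : Fin nq),
      t k = true → t' k = false → (∀ j, k < j → t j = t' j) →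
      totalVal wA a' + totalVal wB t' < totalVal wA a + totalVal wB t := by
    intro a a' t t' k htk ht'k hagree
    have h1 := totalVal_sub_ge wB wB t t' k htk ht'k hagree
      (fun j _ => le_of_eq (abs_of_pos (by rw [hwB]; positivity)))
    have h2 : ∑ j ∈ Finset.univ.filter (fun j => j < k), wB j
        = 2^(np+1) * (2^(k:ℕ) - 1) := by
      rw [hwB]
      rw [show (∑ j ∈ Finset.univ.filter (fun j : Fin nq => j < k), (2:ℝ) ^ ((np + (j:ℕ)) + 1))
        = ∑ j ∈ Finset.univ.filter (fun j : Fin nq => j < k),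
            (fun e => (2:ℝ) ^ ((np + e) + 1)) ((j:ℕ)) from rfl]
      rw [sum_filter_lt_eq_range k (fun e => (2:ℝ) ^ ((np + e) + 1))]
      have : ∀ e ∈ Finset.range (k:ℕ), (2:ℝ)^((np+e)+1) = 2^(np+1) * 2^e := by
        intro e _; rw [pow_add, pow_add, pow_add]; ring
      rw [Finset.sum_congr rfl this, ← Finset.mul_sum, geom_sum_eq (by norm_num : (2:ℝ) ≠ 1)]
      norm_num
    rw [h2] at h1
    have hwk : wB k = 2^(np+1) * 2^(k:ℕ) := by
      simp only [hwB]
      rw [show np + (k:ℕ) + 1 = (np+1) + (k:ℕ) by omega, pow_add]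
    rw [hwk] at h1
    have h3 := hWAle a'
    have h4 := hWA0 a
    linarith
  -- structural part
  have hdecomp : ∀ s : Fin (np+nq) → Bool,
      s = Fin.append (fun i => s (Fin.castAdd nq i)) (fun j => s (Fin.natAdd np j)) := by
    intro s; funext i
    induction i using Fin.addCases with
    | left i => rw [Fin.append_left]
    | right j => rw [Fin.append_right]
  have hw : (fun i : Fin (np + nq) => (2:ℝ) ^ ((i:ℕ)+1)) = Fin.append wA wB := by
    funext i
    induction i using Fin.addCases with
    | left i => rw [Fin.append_left]; simp [hwA]
    | right j => rw [Fin.append_right]; simp [hwB]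
  have hdom_same : ∀ (a a' : Fin np → Bool) (t : Fin nq → Bool),
      dominates (Fin.append wA wB) (Fin.append p q) (Fin.append a' t) (Fin.append a t)
        ↔ dominates wA p a' a := by
    intro a a' t
    unfold dominates
    rw [totalVal_append, totalVal_append, totalVal_append, totalVal_append]
    constructor
    · rintro ⟨h1, h2, h3⟩
      exact ⟨by linarith, by linarith,
        h3.imp (fun h => by linarith) (fun h => by linarith)⟩
    · rintro ⟨h1, h2, h3⟩
      exact ⟨by linarith, by linarith,
        h3.imp (fun h => by linarith) (fun h => by linarith)⟩
  have hmaxd : ∀ t t' : Fin nq → Bool, t ≠ t' →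
      ∃ k : Fin nq, t k ≠ t' k ∧ ∀ j, k < j → t j = t' j := by
    intro t t' h
    have hS : (Finset.univ.filter (fun j => t j ≠ t' j)).Nonempty := by
      by_contra hc
      rw [Finset.not_nonempty_iff_eq_empty, Finset.filter_eq_empty_iff] at hc
      exact h (funext fun j => not_not.mp (hc (Finset.mem_univ j)))
    refine ⟨(Finset.univ.filter (fun j => t j ≠ t' j)).max' hS, ?_, ?_⟩
    · have h2 := Finset.max'_mem _ hS
      exact (Finset.mem_filter.mp h2).2
    · intro j hj
      by_contra hc
      have hjS : j ∈ Finset.univ.filter (fun j => t j ≠ t' j) :=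
        Finset.mem_filter.mpr ⟨Finset.mem_univ j, hc⟩
      exact absurd (Finset.le_max' _ j hjS) (not_le.mpr hj)
  have hcross : ∀ (a a' : Fin np → Bool) (t t' : Fin nq → Bool), t' ≠ t →
      ¬ dominates (Fin.append wA wB) (Fin.append p q)
          (Fin.append a' t') (Fin.append a t) := by
    intro a a' t t' hne hdom
    unfold dominates at hdom
    rw [totalVal_append, totalVal_append, totalVal_append, totalVal_append] at hdom
    obtain ⟨k, hk, hag⟩ := hmaxd t t' (fun h => hne h.symm)
    cases htk : t k with
    | true =>
      have ht'k : t' k = false := by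
        cases h' : t' k
        · rfl
        · exact absurd (htk.trans h'.symm) hk
      have := profit_key a a' t t' k htk ht'k hag
      linarith [hdom.2.1]
    | false =>
      have ht'k : t' k = true := by
        cases h' : t' k
        · exact absurd (htk.trans h'.symm) hk
        · rfl
      have := weight_key a' a t' t k ht'k htk (fun j hj => (hag j hj).symm)
      linarith [hdom.1]
  have hmem : ∀ (a : Fin np → Bool) (t : Fin nq → Bool),
      Fin.append a t ∈ paretoSet Set.univ (Fin.append wA wB) (Fin.append p q)
        ↔ a ∈ paretoSet Set.univ wA p := by
    intro a t
    simp only [paretoSet, Set.mem_setOf_eq, Set.mem_univ, true_and, forall_const]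
    constructor
    · intro h a' hdom
      exact h (Fin.append a' t) ((hdom_same a a' t).mpr hdom)
    · intro h s' hdom
      rw [hdecomp s'] at hdom
      by_cases ht : (fun j => s' (Fin.natAdd np j)) = t
      · rw [ht] at hdom
        exact h _ ((hdom_same a _ t).mp hdom)
      · exact hcross a _ t _ ht hdom
  have hset : paretoSet Set.univ (Fin.append wA wB) (Fin.append p q)
      = (fun x : (Fin np → Bool) × (Fin nq → Bool) => Fin.append x.1 x.2) ''
          ((paretoSet Set.univ wA p) ×ˢ (Set.univ : Set (Fin nq → Bool))) := by
    ext s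
    constructor
    · intro hs
      refine ⟨(fun i => s (Fin.castAdd nq i), fun j => s (Fin.natAdd np j)),
        Set.mem_prod.mpr ⟨?_, Set.mem_univ _⟩, (hdecomp s).symm⟩
      rw [hdecomp s] at hs
      exact (hmem _ _).mp hs
    · rintro ⟨⟨a, t⟩, hat, rfl⟩
      exact (hmem a t).mpr (Set.mem_prod.mp hat).1
  have hinj : Function.Injective
      (fun x : (Fin np → Bool) × (Fin nq → Bool) => Fin.append x.1 x.2) := by
    rintro ⟨a, t⟩ ⟨a', t'⟩ h
    simp only [Prod.mk.injEq]
    constructor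
    · funext i
      have := congrFun h (Fin.castAdd nq i)
      simpa [Fin.append_left] using this
    · funext j
      have := congrFun h (Fin.natAdd np j)
      simpa [Fin.append_right] using this
  have hcard : ((paretoSet Set.univ wA p) ×ˢ (Set.univ : Set (Fin nq → Bool))).ncard
      = (paretoSet Set.univ wA p).ncard * 2 ^ nq := by
    rw [← Nat.card_coe_set_eq, ← Nat.card_coe_set_eq]
    rw [Nat.card_congr (Equiv.Set.prod _ _), Nat.card_prod]
    congr 1
    rw [Nat.card_coe_set_eq, Set.ncard_univ, Nat.card_eq_fintype_card]
    simp
  have final : (paretoSet Set.univ (fun i : Fin (np + nq) => (2:ℝ) ^ ((i:ℕ)+1))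
        (Fin.append p q)).ncard
      = 2 ^ nq * (paretoSet Set.univ wA p).ncard := by
    rw [hw, hset, Set.ncard_image_of_injective _ hinj, hcard, mul_comm]
  exact final
end

section
/- There is a constant c > 0 such that the following holds for all reals φ > 1 and all positive integers n_p, n_q. Let m_i = ((n_p+1)/(φ-1)) · ((2φ-1)/(φ-1))^{i-1}, and let a_1,...,a_{n_p} have weights 2^1,...,2^{n_p} and profits p_i drawn independently and uniformly from [0, 1/φ], and let b_1,...,b_{n_q} have weights 2^{n_p+1},...,2^{n_p+n_q} and profits q_i ∈ (m_i - ⌈m_i⌉/φ, m_i] chosen arbitrarily. Then the expected number of Pareto optimal solutions of K({a_1,...,a_{n_p}, b_1,...,b_{n_q}}) with solution set {0,1}^{n_p+n_q} is at least c · n_p² · 2^{n_q}. -/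
open MeasureTheory Finset

/-- The uniform probability measure on a set of reals. -/
noncomputable def unifOn (s : Set ℝ) : Measure ℝ :=
  (volume s)⁻¹ • volume.restrict s

namespace KnAux

open scoped Classical ENNReal

/-- binary value of a 0-1 vector -/
def bval {n : ℕ} (s : Fin n → Bool) : ℕ := ∑ i, if s i then 2 ^ (i : ℕ) else 0

lemma sum_range_two_pow (n : ℕ) : (∑ i ∈ Finset.range n, 2 ^ i) + 1 = 2 ^ n := by
  induction n with
  | zero => simp
  | succ n ih => rw [Finset.sum_range_succ, pow_succ]; omega

lemma bval_lt {n : ℕ} (s : Fin n → Bool) : bval s < 2 ^ n := by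
  have h1 : bval s ≤ ∑ i : Fin n, 2 ^ (i : ℕ) := by
    refine Finset.sum_le_sum fun i _ => ?_
    split <;> simp
  have h2 : ∑ i : Fin n, 2 ^ (i : ℕ) = ∑ i ∈ Finset.range n, 2 ^ i :=
    Fin.sum_univ_eq_sum_range _ _
  have := sum_range_two_pow n
  omega

lemma bval_cons {n : ℕ} (b : Bool) (s : Fin n → Bool) :
    bval (Fin.cons b s) = (if b then 1 else 0) + 2 * bval s := by
  rw [bval, Fin.sum_univ_succ]
  simp only [Fin.cons_zero, Fin.cons_succ, pow_zero, bval, Finset.mul_sum]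
  congr 1
  refine Finset.sum_congr rfl fun i _ => ?_
  rcases s i with _ | _ <;> simp [pow_succ, mul_comm]

lemma bval_injective {n : ℕ} : Function.Injective (bval (n := n)) := by
  induction n with
  | zero => intro s s' _; funext i; exact absurd i.2 (by omega)
  | succ n ih =>
    intro s s' h
    rw [← Fin.cons_self_tail s, ← Fin.cons_self_tail s'] at h ⊢
    rw [bval_cons, bval_cons] at h
    have hb : s 0 = s' 0 := by
      rcases hs : s 0 <;> rcases hs' : s' 0 <;> simp [hs, hs'] at h ⊢ <;> omega
    rw [hb] at h ⊢
    have : bval (Fin.tail s) = bval (Fin.tail s') := by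
      rcases s' 0 <;> simp at h <;> omega
    rw [ih this]

lemma bval_snoc {n : ℕ} (s : Fin n → Bool) (b : Bool) :
    bval (Fin.snoc s b) = bval s + if b then 2 ^ n else 0 := by
  rw [bval, Fin.sum_univ_castSucc]
  simp [bval, Fin.snoc_castSucc, Fin.snoc_last]

lemma totalVal_snoc {n : ℕ} (p : Fin n → ℝ) (t : ℝ) (s : Fin n → Bool) (b : Bool) :
    totalVal (Fin.snoc p t) (Fin.snoc s b) = totalVal p s + if b then t else 0 := by
  rw [totalVal, Fin.sum_univ_castSucc]
  simp [totalVal, Fin.snoc_castSucc, Fin.snoc_last]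

lemma totalVal_nonneg {n : ℕ} {p : Fin n → ℝ} (hp : ∀ i, 0 ≤ p i) (s : Fin n → Bool) :
    0 ≤ totalVal p s := by
  refine Finset.sum_nonneg fun i _ => ?_
  split
  · exact hp i
  · exact le_rfl

lemma totalVal_le_sum {n : ℕ} {p : Fin n → ℝ} (hp : ∀ i, 0 ≤ p i) (s : Fin n → Bool) :
    totalVal p s ≤ ∑ i, p i := by
  refine Finset.sum_le_sum fun i _ => ?_
  split
  · exact le_rfl
  · exact hp i

/-- `s` is a record (Pareto optimal w.r.t. power-of-two weights). -/
def isRec {n : ℕ} (p : Fin n → ℝ) (s : Fin n → Bool) : Prop :=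
  ∀ s', bval s' < bval s → totalVal p s' < totalVal p s

/-- Number of records whose profit exceeds the maximal profit minus `x`. -/
noncomputable def recCnt {n : ℕ} (p : Fin n → ℝ) (x : ℝ) : ℕ :=
  (Finset.univ.filter fun s : Fin n → Bool =>
    isRec p s ∧ (∑ i, p i) - x < totalVal p s).card

/-- Total number of records. -/
noncomputable def totCnt {n : ℕ} (p : Fin n → ℝ) : ℕ :=
  (Finset.univ.filter fun s : Fin n → Bool => isRec p s).card

lemma isRec_snoc_false {n : ℕ} (p : Fin n → ℝ) (t : ℝ) (s : Fin n → Bool) :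
    isRec (Fin.snoc p t) (Fin.snoc s false) ↔ isRec p s := by
  constructor
  · intro h s' hlt
    have := h (Fin.snoc s' false) (by
      rw [bval_snoc, bval_snoc]; simpa using hlt)
    rw [totalVal_snoc, totalVal_snoc] at this
    simpa using this
  · intro h s' hlt
    rw [← Fin.snoc_init_self s'] at hlt ⊢
    rcases hb : s' (Fin.last n) with _ | _ <;> (try simp only [hb] at hlt) <;> (try simp only [hb])
    · rw [bval_snoc, bval_snoc] at hlt
      simp only [if_neg, Bool.false_eq_true, if_false, add_zero] at hlt
      rw [totalVal_snoc, totalVal_snoc]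
      simpa using h _ hlt
    · exfalso
      rw [bval_snoc, bval_snoc] at hlt
      have := bval_lt s
      simp at hlt
      omega

lemma isRec_snoc_true {n : ℕ} {p : Fin n → ℝ} (hp : ∀ i, 0 ≤ p i) (t : ℝ) (s : Fin n → Bool) :
    isRec (Fin.snoc p t) (Fin.snoc s true) ↔
      isRec p s ∧ (∑ i, p i) - t < totalVal p s := by
  constructor
  · intro h
    constructor
    · intro s' hlt
      have := h (Fin.snoc s' true) (by rw [bval_snoc, bval_snoc]; simpa using hlt)
      rw [totalVal_snoc, totalVal_snoc] at this
      simpa using this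
    · have := h (Fin.snoc (fun _ => true) false) (by
        rw [bval_snoc, bval_snoc]
        have := bval_lt (fun _ : Fin n => true)
        simp; omega)
      rw [totalVal_snoc, totalVal_snoc] at this
      have hfull : totalVal p (fun _ => true) = ∑ i, p i := by
        simp [totalVal]
      simp [hfull] at this
      linarith
  · rintro ⟨h1, h2⟩ s' hlt
    rw [← Fin.snoc_init_self s'] at hlt ⊢
    rcases hb : s' (Fin.last n) with _ | _ <;> (try simp only [hb] at hlt) <;> (try simp only [hb])
    · rw [totalVal_snoc, totalVal_snoc]
      have hle := totalVal_le_sum hp (Fin.init s')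
      simp only [Bool.false_eq_true, if_false, if_pos, add_zero]
      linarith
    · rw [bval_snoc, bval_snoc] at hlt
      simp only [if_pos] at hlt
      have hlt' : bval (Fin.init s') < bval s := by omega
      rw [totalVal_snoc, totalVal_snoc]
      have := h1 _ hlt'
      simp only [if_pos]
      linarith

lemma card_filter_snoc {n : ℕ} (P : (Fin (n + 1) → Bool) → Prop) [DecidablePred P] :
    (Finset.univ.filter P).card
      = (Finset.univ.filter fun s : Fin n → Bool => P (Fin.snoc s true)).card
        + (Finset.univ.filter fun s : Fin n → Bool => P (Fin.snoc s false)).card := by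
  rw [Finset.card_filter, Finset.card_filter, Finset.card_filter]
  rw [← Equiv.sum_comp (Fin.snocEquiv (fun _ => Bool)) (fun s => if P s then 1 else 0)]
  rw [Fintype.sum_prod_type, Finset.sum_comm, ← Finset.sum_add_distrib]
  refine Finset.sum_congr rfl fun s _ => ?_
  have he : ∀ b : Bool, (Fin.snocEquiv (fun _ => Bool)) (b, s) = Fin.snoc s b := fun b => rfl
  rw [Fintype.sum_bool, he true, he false]

lemma recCnt_snoc {n : ℕ} {p : Fin n → ℝ} (hp : ∀ i, 0 ≤ p i) (t x : ℝ) :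
    recCnt (Fin.snoc p t) x = recCnt p (min x t) + recCnt p (x - t) := by
  rw [recCnt, card_filter_snoc]
  congr 1
  · rw [recCnt]
    refine congrArg Finset.card (Finset.filter_congr fun s _ => ?_)
    rw [isRec_snoc_true hp, totalVal_snoc, Fin.sum_univ_castSucc]
    simp only [Fin.snoc_castSucc, Fin.snoc_last, if_pos]
    constructor
    · rintro ⟨⟨h1, h2⟩, h3⟩
      refine ⟨h1, ?_⟩
      rcases le_total x t with h | h
      · rw [min_eq_left h]; linarith
      · rw [min_eq_right h]; linarith
    · rintro ⟨h1, h2⟩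
      have hx := min_le_left x t
      have ht := min_le_right x t
      exact ⟨⟨h1, by linarith⟩, by linarith⟩
  · rw [recCnt]
    refine congrArg Finset.card (Finset.filter_congr fun s _ => ?_)
    rw [isRec_snoc_false, totalVal_snoc, Fin.sum_univ_castSucc]
    simp only [Fin.snoc_castSucc, Fin.snoc_last, Bool.false_eq_true, if_false, add_zero]
    constructor
    · rintro ⟨h1, h2⟩; exact ⟨h1, by linarith⟩
    · rintro ⟨h1, h2⟩; exact ⟨h1, by linarith⟩

lemma totCnt_snoc {n : ℕ} {p : Fin n → ℝ} (hp : ∀ i, 0 ≤ p i) (t : ℝ) :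
    totCnt (Fin.snoc p t) = totCnt p + recCnt p t := by
  rw [totCnt, card_filter_snoc, add_comm (Finset.card _)]
  congr 1
  · rw [totCnt]
    refine congrArg Finset.card (Finset.filter_congr fun s _ => ?_)
    rw [isRec_snoc_false]
  · rw [recCnt]
    refine congrArg Finset.card (Finset.filter_congr fun s _ => ?_)
    rw [isRec_snoc_true hp]

lemma recCnt_zero_pos {p : Fin 0 → ℝ} {x : ℝ} (hx : 0 < x) : recCnt p x = 1 := by
  rw [recCnt]
  have h : (Finset.univ.filter fun s : Fin 0 → Bool =>
      isRec p s ∧ (∑ i, p i) - x < totalVal p s) = Finset.univ := by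
    refine Finset.filter_true_of_mem fun s _ => ?_
    refine ⟨fun s' h => by simp [bval] at h, ?_⟩
    simp [totalVal]
    linarith
  rw [h, Finset.card_univ]
  simp

lemma totCnt_zero (p : Fin 0 → ℝ) : totCnt p = 1 := by
  rw [totCnt]
  have h : (Finset.univ.filter fun s : Fin 0 → Bool => isRec p s) = Finset.univ := by
    refine Finset.filter_true_of_mem fun s _ => fun s' h => by simp [bval] at h
  rw [h, Finset.card_univ]
  simp

lemma measurable_totalVal {n : ℕ} (s : Fin n → Bool) :
    Measurable fun p : Fin n → ℝ => totalVal p s := by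
  refine Finset.measurable_sum _ fun i _ => ?_
  split
  · exact measurable_pi_apply i
  · exact measurable_const

lemma measurableSet_isRec {n : ℕ} (s : Fin n → Bool) :
    MeasurableSet {p : Fin n → ℝ | isRec p s} := by
  have : {p : Fin n → ℝ | isRec p s}
      = ⋂ s' : Fin n → Bool, ⋂ _ : bval s' < bval s,
          {p | totalVal p s' < totalVal p s} := by
    ext p; simp [isRec]
  rw [this]
  exact MeasurableSet.iInter fun s' => MeasurableSet.iInter fun _ =>
    measurableSet_lt (measurable_totalVal s') (measurable_totalVal s)

lemma recCnt_cast {n : ℕ} (p : Fin n → ℝ) (x : ℝ) :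
    (recCnt p x : ℝ≥0∞)
      = ∑ s : Fin n → Bool,
          if isRec p s ∧ (∑ i, p i) - x < totalVal p s then (1 : ℝ≥0∞) else 0 := by
  rw [recCnt, Finset.card_filter]
  push_cast
  refine Finset.sum_congr rfl fun s _ => ?_
  split <;> simp

lemma measurable_recCnt {n : ℕ} (x : ℝ) :
    Measurable fun p : Fin n → ℝ => (recCnt p x : ℝ≥0∞) := by
  simp only [recCnt_cast]
  refine Finset.measurable_sum _ fun s _ => ?_
  refine Measurable.ite ?_ measurable_const measurable_const
  exact (measurableSet_isRec s).inter
    (measurableSet_lt ((Finset.measurable_sum _ fun i _ => measurable_pi_apply i).sub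
      measurable_const) (measurable_totalVal s))

lemma measurable_totCnt {n : ℕ} :
    Measurable fun p : Fin n → ℝ => (totCnt p : ℝ≥0∞) := by
  have h : ∀ p : Fin n → ℝ, (totCnt p : ℝ≥0∞)
      = ∑ s : Fin n → Bool, if isRec p s then (1 : ℝ≥0∞) else 0 := by
    intro p
    rw [totCnt, Finset.card_filter]
    push_cast
    refine Finset.sum_congr rfl fun s _ => ?_
    split <;> simp
  simp only [h]
  refine Finset.measurable_sum _ fun s _ => ?_
  exact Measurable.ite (measurableSet_isRec s) measurable_const measurable_const

section Meas

variable {φ : ℝ}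

noncomputable abbrev μu (φ : ℝ) : Measure ℝ := unifOn (Set.Icc 0 (1/φ))

lemma unifOn_apply (hφ : 1 < φ) (A : Set ℝ) :
    μu φ A = ENNReal.ofReal φ * volume (A ∩ Set.Icc 0 (1/φ)) := by
  have hφ0 : 0 < φ := lt_trans one_pos hφ
  rw [show μu φ = (volume (Set.Icc (0:ℝ) (1/φ)))⁻¹ • volume.restrict (Set.Icc 0 (1/φ)) from rfl, Measure.smul_apply, Measure.restrict_apply' measurableSet_Icc, smul_eq_mul]
  congr 1
  rw [Real.volume_Icc, sub_zero, one_div, ENNReal.ofReal_inv_of_pos hφ0, inv_inv]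

lemma isProb (hφ : 1 < φ) : IsProbabilityMeasure (μu φ) := by
  have hφ0 : 0 < φ := lt_trans one_pos hφ
  constructor
  rw [unifOn_apply hφ, Set.univ_inter, Real.volume_Icc, sub_zero,
    ← ENNReal.ofReal_mul (le_of_lt hφ0), mul_one_div_cancel (ne_of_gt hφ0),
    ENNReal.ofReal_one]

lemma mu_sub (hφ : 1 < φ) {A : Set ℝ} (hA : A ⊆ Set.Icc 0 (1/φ)) :
    μu φ A = ENNReal.ofReal φ * volume A := by
  rw [unifOn_apply hφ, Set.inter_eq_left.mpr hA]

lemma mu_Ioo (hφ : 1 < φ) {x : ℝ} (h1 : x ≤ 1/φ) :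
    μu φ (Set.Ioo 0 x) = ENNReal.ofReal φ * ENNReal.ofReal x := by
  rw [mu_sub hφ (fun y hy => ⟨le_of_lt hy.1, le_of_lt (lt_of_lt_of_le hy.2 h1)⟩),
    Real.volume_Ioo, sub_zero]

lemma mu_Icc (hφ : 1 < φ) {x : ℝ} (h0 : 0 ≤ x) :
    μu φ (Set.Icc x (1/φ)) = ENNReal.ofReal φ * ENNReal.ofReal (1/φ - x) := by
  rw [mu_sub hφ (fun y hy => ⟨le_trans h0 hy.1, hy.2⟩), Real.volume_Icc]

lemma mu_Ioc (hφ : 1 < φ) {x : ℝ} (h0 : 0 ≤ x) :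
    μu φ (Set.Ioc x (1/φ)) = ENNReal.ofReal φ * ENNReal.ofReal (1/φ - x) := by
  rw [mu_sub hφ (fun y hy => ⟨le_trans h0 (le_of_lt hy.1), hy.2⟩), Real.volume_Ioc]

lemma ae_box (hφ : 1 < φ) (n : ℕ) :
    ∀ᵐ p ∂(Measure.pi fun _ : Fin n => μu φ), ∀ i, p i ∈ Set.Icc 0 (1/φ) := by
  haveI := isProb hφ
  rw [ae_all_iff]
  intro i
  rw [Filter.Eventually, mem_ae_iff]
  have : {p : Fin n → ℝ | p i ∈ Set.Icc 0 (1/φ)}ᶜ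
      = Function.eval i ⁻¹' (Set.Icc (0:ℝ) (1/φ))ᶜ := rfl
  rw [this]
  refine Measure.pi_eval_preimage_null _ ?_
  rw [unifOn_apply hφ, Set.compl_inter_self, measure_empty, mul_zero]

lemma lintegral_pi_succ (hφ : 1 < φ) (n : ℕ) (F : (Fin (n+1) → ℝ) → ℝ≥0∞)
    (hF : Measurable F) :
    ∫⁻ p, F p ∂(Measure.pi fun _ : Fin (n+1) => μu φ)
      = ∫⁻ t, ∫⁻ p', F (Fin.snoc p' t) ∂(Measure.pi fun _ : Fin n => μu φ) ∂(μu φ) := by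
  haveI := isProb hφ
  have h1 := (measurePreserving_piFinSuccAbove (fun _ : Fin (n+1) => μu φ) (Fin.last n)).symm
  rw [← h1.lintegral_comp hF]
  refine Eq.trans
    (MeasureTheory.lintegral_prod _ ((hF.comp (MeasurableEquiv.measurable _)).aemeasurable)) ?_
  refine lintegral_congr fun t => lintegral_congr fun p' => ?_
  congr 1
  show (MeasurableEquiv.piFinSuccAbove (fun _ => ℝ) (Fin.last n)).symm (t, p') = Fin.snoc p' t
  simp [MeasurableEquiv.piFinSuccAbove, Fin.insertNth_last']
  rfl

end Meas

section Induction

variable {φ : ℝ}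

lemma setLIntegral_const_le (hφ : 1 < φ) {S : Set ℝ} (hS : MeasurableSet S)
    {G : ℝ → ℝ≥0∞} {c : ℝ≥0∞} (h : ∀ t ∈ S, c ≤ G t) :
    c * μu φ S ≤ ∫⁻ t in S, G t ∂(μu φ) := by
  rw [← setLIntegral_const S c]
  refine lintegral_mono_ae ?_
  exact (ae_restrict_iff' hS).mpr (Filter.Eventually.of_forall h)

lemma key1 (hφ : 1 < φ) : ∀ n : ℕ, ∀ x : ℝ, 0 < x → x ≤ 1/φ →
    ENNReal.ofReal (1 + n * φ * x)
      ≤ ∫⁻ p, (recCnt p x : ℝ≥0∞) ∂(Measure.pi fun _ : Fin n => μu φ) := by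
  haveI := isProb hφ
  have hφ0 : (0:ℝ) < φ := lt_trans one_pos hφ
  intro n
  induction n with
  | zero =>
    intro x hx _
    have h : ∀ p : Fin 0 → ℝ, (recCnt p x : ℝ≥0∞) = 1 := fun p => by
      rw [recCnt_zero_pos hx]; simp
    rw [lintegral_congr h, lintegral_one, measure_univ]
    simp
  | succ n ih =>
    intro x hx0 hxa
    rw [lintegral_pi_succ hφ n _ (measurable_recCnt x)]
    have hinner : ∀ t : ℝ,
        ∫⁻ p', (recCnt (Fin.snoc p' t) x : ℝ≥0∞) ∂(Measure.pi fun _ : Fin n => μu φ)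
          = (∫⁻ p', (recCnt p' (min x t) : ℝ≥0∞) ∂(Measure.pi fun _ : Fin n => μu φ))
            + ∫⁻ p', (recCnt p' (x - t) : ℝ≥0∞) ∂(Measure.pi fun _ : Fin n => μu φ) := by
      intro t
      rw [← lintegral_add_left (measurable_recCnt _)]
      refine lintegral_congr_ae ?_
      filter_upwards [ae_box hφ n] with p' hp'
      rw [recCnt_snoc (fun i => (hp' i).1)]
      push_cast
      ring
    simp only [hinner]
    set G : ℝ → ℝ≥0∞ := fun t =>
      (∫⁻ p', (recCnt p' (min x t) : ℝ≥0∞) ∂(Measure.pi fun _ : Fin n => μu φ))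
        + ∫⁻ p', (recCnt p' (x - t) : ℝ≥0∞) ∂(Measure.pi fun _ : Fin n => μu φ) with hG
    have hb1 : ∀ t ∈ Set.Ioo (0:ℝ) x, ENNReal.ofReal (2 + n * φ * x) ≤ G t := by
      intro t ht
      have hA : ENNReal.ofReal (1 + n * φ * t)
          ≤ ∫⁻ p', (recCnt p' (min x t) : ℝ≥0∞) ∂(Measure.pi fun _ : Fin n => μu φ) := by
        rw [min_eq_right (le_of_lt ht.2)]
        exact ih t ht.1 (le_trans (le_of_lt ht.2) hxa)
      have hB : ENNReal.ofReal (1 + n * φ * (x - t))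
          ≤ ∫⁻ p', (recCnt p' (x - t) : ℝ≥0∞) ∂(Measure.pi fun _ : Fin n => μu φ) :=
        ih (x - t) (by linarith [ht.2]) (by linarith [ht.1])
      calc ENNReal.ofReal (2 + n * φ * x)
          = ENNReal.ofReal ((1 + n * φ * t) + (1 + n * φ * (x - t))) := by ring_nf
        _ ≤ _ := by
            have h1 : (0:ℝ) ≤ (n:ℝ) * φ * t :=
              mul_nonneg (mul_nonneg n.cast_nonneg hφ0.le) ht.1.le
            have h2 : (0:ℝ) ≤ (n:ℝ) * φ * (x - t) :=
              mul_nonneg (mul_nonneg n.cast_nonneg hφ0.le) (by linarith [ht.2])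
            rw [ENNReal.ofReal_add (by linarith) (by linarith)]
            exact add_le_add hA hB
    have hb2 : ∀ t ∈ Set.Icc x (1/φ), ENNReal.ofReal (1 + n * φ * x) ≤ G t := by
      intro t ht
      have hA : ENNReal.ofReal (1 + n * φ * x)
          ≤ ∫⁻ p', (recCnt p' (min x t) : ℝ≥0∞) ∂(Measure.pi fun _ : Fin n => μu φ) := by
        rw [min_eq_left ht.1]
        exact ih x hx0 hxa
      exact le_trans hA le_self_add
    have hdisj : Disjoint (Set.Ioo (0:ℝ) x) (Set.Icc x (1/φ)) := by
      rw [Set.disjoint_left]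
      rintro t ⟨_, h2⟩ ⟨h3, _⟩
      linarith
    calc ENNReal.ofReal (1 + (n+1 : ℕ) * φ * x)
        = ENNReal.ofReal (2 + n * φ * x) * (ENNReal.ofReal φ * ENNReal.ofReal x)
          + ENNReal.ofReal (1 + n * φ * x) * (ENNReal.ofReal φ * ENNReal.ofReal (1/φ - x)) := by
          rw [← ENNReal.ofReal_mul (le_of_lt hφ0), ← ENNReal.ofReal_mul (by positivity),
            ← ENNReal.ofReal_mul (le_of_lt hφ0), ← ENNReal.ofReal_mul (by positivity),
            ← ENNReal.ofReal_add ?_ ?_]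
          · congr 1
            push_cast
            field_simp
            ring
          · have h1 : (0:ℝ) ≤ (n:ℝ) * φ * x :=
              mul_nonneg (mul_nonneg n.cast_nonneg hφ0.le) hx0.le
            exact mul_nonneg (by linarith) (mul_nonneg hφ0.le hx0.le)
          · have h1 : (0:ℝ) ≤ (n:ℝ) * φ * x :=
              mul_nonneg (mul_nonneg n.cast_nonneg hφ0.le) hx0.le
            exact mul_nonneg (by linarith) (mul_nonneg hφ0.le (by linarith))
      _ = ENNReal.ofReal (2 + n * φ * x) * μu φ (Set.Ioo 0 x)
          + ENNReal.ofReal (1 + n * φ * x) * μu φ (Set.Icc x (1/φ)) := by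
          rw [mu_Ioo hφ hxa, mu_Icc hφ (le_of_lt hx0)]
      _ ≤ (∫⁻ t in Set.Ioo (0:ℝ) x, G t ∂(μu φ))
          + ∫⁻ t in Set.Icc x (1/φ), G t ∂(μu φ) :=
          add_le_add (setLIntegral_const_le hφ measurableSet_Ioo hb1)
            (setLIntegral_const_le hφ measurableSet_Icc hb2)
      _ = ∫⁻ t in Set.Ioo (0:ℝ) x ∪ Set.Icc x (1/φ), G t ∂(μu φ) :=
          (lintegral_union measurableSet_Icc hdisj).symm
      _ ≤ ∫⁻ t, G t ∂(μu φ) := setLIntegral_le_lintegral _ _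

end Induction

lemma key2 {φ : ℝ} (hφ : 1 < φ) : ∀ n : ℕ,
    ENNReal.ofReal (1 + n * (n + 3) / 8)
      ≤ ∫⁻ p, (totCnt p : ℝ≥0∞) ∂(Measure.pi fun _ : Fin n => μu φ) := by
  haveI := isProb hφ
  have hφ0 : (0:ℝ) < φ := lt_trans one_pos hφ
  intro n
  induction n with
  | zero =>
    have h : ∀ p : Fin 0 → ℝ, (totCnt p : ℝ≥0∞) = 1 := fun p => by
      rw [totCnt_zero]; simp
    rw [lintegral_congr h, lintegral_one, measure_univ]
    simp
  | succ n ih =>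
    rw [lintegral_pi_succ hφ n _ measurable_totCnt]
    have hinner : ∀ t : ℝ,
        ∫⁻ p', (totCnt (Fin.snoc p' t) : ℝ≥0∞) ∂(Measure.pi fun _ : Fin n => μu φ)
          = (∫⁻ p', (totCnt p' : ℝ≥0∞) ∂(Measure.pi fun _ : Fin n => μu φ))
            + ∫⁻ p', (recCnt p' t : ℝ≥0∞) ∂(Measure.pi fun _ : Fin n => μu φ) := by
      intro t
      rw [← lintegral_add_left measurable_totCnt]
      refine lintegral_congr_ae ?_
      filter_upwards [ae_box hφ n] with p' hp'
      rw [totCnt_snoc (fun i => (hp' i).1)]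
      push_cast
      ring
    simp only [hinner]
    rw [lintegral_add_left measurable_const, lintegral_const, measure_univ, mul_one]
    have hR : ENNReal.ofReal ((n + 2) / 4)
        ≤ ∫⁻ t, (∫⁻ p', (recCnt p' t : ℝ≥0∞) ∂(Measure.pi fun _ : Fin n => μu φ)) ∂(μu φ) := by
      have hb : ∀ t ∈ Set.Ioc ((1/φ)/2) (1/φ), ENNReal.ofReal ((n + 2) / 2)
          ≤ ∫⁻ p', (recCnt p' t : ℝ≥0∞) ∂(Measure.pi fun _ : Fin n => μu φ) := by
        intro t ht
        have ht0 : 0 < t := lt_of_le_of_lt (by positivity) ht.1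
        refine le_trans ?_ (key1 hφ n t ht0 ht.2)
        refine ENNReal.ofReal_le_ofReal ?_
        have h2 : 1/2 ≤ φ * t := by
          have h := mul_lt_mul_of_pos_left ht.1 hφ0
          have he : φ * (1/φ/2) = 1/2 := by field_simp
          linarith [he ▸ h]
        have h3 : (n:ℝ) * (1/2) ≤ (n:ℝ) * (φ * t) :=
          mul_le_mul_of_nonneg_left h2 n.cast_nonneg
        have h4 : (0:ℝ) ≤ (n:ℝ) := n.cast_nonneg
        nlinarith
      calc ENNReal.ofReal ((n + 2 : ℝ) / 4)
          = ENNReal.ofReal ((n + 2 : ℝ) / 2) * μu φ (Set.Ioc ((1/φ)/2) (1/φ)) := by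
            rw [mu_Ioc hφ (by positivity), ← ENNReal.ofReal_mul (le_of_lt hφ0),
              ← ENNReal.ofReal_mul (by positivity)]
            congr 1
            field_simp
            ring
        _ ≤ ∫⁻ t in Set.Ioc ((1/φ)/2) (1/φ), _ ∂(μu φ) :=
            setLIntegral_const_le hφ measurableSet_Ioc hb
        _ ≤ _ := setLIntegral_le_lintegral _ _
    calc ENNReal.ofReal (1 + (n+1 : ℕ) * ((n+1 : ℕ) + 3) / 8)
        = ENNReal.ofReal (1 + n * (n + 3) / 8) + ENNReal.ofReal ((n + 2 : ℝ) / 4) := by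
          rw [← ENNReal.ofReal_add (by positivity) (by positivity)]
          congr 1
          push_cast
          ring
      _ ≤ _ := add_le_add ih hR

section Combinatorial

lemma totalVal_pow_two {N : ℕ} (s : Fin N → Bool) :
    totalVal (fun i : Fin N => (2:ℝ) ^ ((i:ℕ)+1)) s = 2 * (bval s : ℝ) := by
  rw [totalVal, bval]
  push_cast
  rw [Finset.mul_sum]
  refine Finset.sum_congr rfl fun i _ => ?_
  split <;> ring

lemma mem_pareto_iff {N : ℕ} (P : Fin N → ℝ) (s : Fin N → Bool) :
    s ∈ paretoSet Set.univ (fun i : Fin N => (2:ℝ) ^ ((i:ℕ)+1)) P ↔ isRec P s := by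
  constructor
  · rintro ⟨-, h⟩ s' hlt
    by_contra hc
    push_neg at hc
    refine h s' (Set.mem_univ _) ?_
    have hw : totalVal (fun i : Fin N => (2:ℝ) ^ ((i:ℕ)+1)) s'
        < totalVal (fun i : Fin N => (2:ℝ) ^ ((i:ℕ)+1)) s := by
      rw [totalVal_pow_two, totalVal_pow_two]
      have : (bval s' : ℝ) < bval s := by exact_mod_cast hlt
      linarith
    exact ⟨le_of_lt hw, hc, Or.inl hw⟩
  · intro h
    refine ⟨Set.mem_univ _, fun s' _ hd => ?_⟩
    obtain ⟨hw, hp, hstrict⟩ := hd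
    rw [totalVal_pow_two, totalVal_pow_two] at hw
    have hble : bval s' ≤ bval s := by
      have hr : (bval s' : ℝ) ≤ bval s := by linarith
      exact_mod_cast hr
    rcases lt_or_eq_of_le hble with hblt | hbeq
    · exact absurd hp (not_le.mpr (h s' hblt))
    · have : s' = s := bval_injective hbeq
      subst this
      rw [totalVal_pow_two] at hstrict
      rcases hstrict with h1 | h1 <;> exact lt_irrefl _ h1

lemma append_decomp {m n : ℕ} (f : Fin (m + n) → Bool) :
    f = Fin.append (fun i => f (Fin.castAdd n i)) (fun j => f (Fin.natAdd m j)) := by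
  funext i
  refine Fin.addCases (fun i0 => ?_) (fun j0 => ?_) i
  · rw [Fin.append_left]
  · rw [Fin.append_right]

lemma bval_append {m n : ℕ} (sa : Fin m → Bool) (sb : Fin n → Bool) :
    bval (Fin.append sa sb) = bval sa + 2 ^ m * bval sb := by
  rw [bval, Fin.sum_univ_add]
  congr 1
  · refine Finset.sum_congr rfl fun i _ => ?_
    rw [Fin.append_left]
    simp
  · rw [bval, Finset.mul_sum]
    refine Finset.sum_congr rfl fun j _ => ?_
    rw [Fin.append_right]
    rcases sb j <;> simp [pow_add]

lemma totalVal_append {m n : ℕ} (p : Fin m → ℝ) (q : Fin n → ℝ)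
    (sa : Fin m → Bool) (sb : Fin n → Bool) :
    totalVal (Fin.append p q) (Fin.append sa sb) = totalVal p sa + totalVal q sb := by
  rw [totalVal, Fin.sum_univ_add]
  congr 1
  · refine Finset.sum_congr rfl fun i _ => ?_
    rw [Fin.append_left, Fin.append_left]
  · refine Finset.sum_congr rfl fun j _ => ?_
    rw [Fin.append_right, Fin.append_right]

lemma exists_top_diff {n : ℕ} : ∀ {s s' : Fin n → Bool}, bval s' < bval s →
    ∃ i, s i = true ∧ s' i = false ∧ ∀ j, i < j → s j = s' j := by
  induction n with
  | zero => intro s s' h; simp [bval] at h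
  | succ n ih =>
    intro s s' h
    rw [← Fin.snoc_init_self s, ← Fin.snoc_init_self s'] at *
    rcases hb : s (Fin.last n) with _|_ <;> rcases hb' : s' (Fin.last n) with _|_ <;>
      simp only [hb, hb'] at h ⊢
    · rw [bval_snoc, bval_snoc] at h
      simp only [Bool.false_eq_true, if_false, add_zero] at h
      obtain ⟨i, h1, h2, h3⟩ := ih (s := Fin.init s) (s' := Fin.init s') h
      refine ⟨Fin.castSucc i, by rw [Fin.snoc_castSucc]; exact h1,
        by rw [Fin.snoc_castSucc]; exact h2, fun j => ?_⟩
      refine Fin.lastCases ?_ (fun j0 hj0 => ?_) j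
      · intro _; rw [Fin.snoc_last, Fin.snoc_last]
      · rw [Fin.snoc_castSucc, Fin.snoc_castSucc]
        exact h3 j0 (by exact_mod_cast hj0)
    · exfalso
      rw [bval_snoc, bval_snoc] at h
      have hl := bval_lt (Fin.init s)
      simp only [if_pos, Bool.false_eq_true, if_false, add_zero] at h
      omega
    · refine ⟨Fin.last n, by rw [Fin.snoc_last], by rw [Fin.snoc_last],
        fun j hj => absurd (Fin.le_last j) (not_le.mpr hj)⟩
    · rw [bval_snoc, bval_snoc] at h
      simp only [if_pos] at h
      obtain ⟨i, h1, h2, h3⟩ := ih (s := Fin.init s) (s' := Fin.init s') (by omega)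
      refine ⟨Fin.castSucc i, by rw [Fin.snoc_castSucc]; exact h1,
        by rw [Fin.snoc_castSucc]; exact h2, fun j => ?_⟩
      refine Fin.lastCases ?_ (fun j0 hj0 => ?_) j
      · intro _; rw [Fin.snoc_last, Fin.snoc_last]
      · rw [Fin.snoc_castSucc, Fin.snoc_castSucc]
        exact h3 j0 (by exact_mod_cast hj0)

end Combinatorial

section Qpart

variable {φ : ℝ} {np nq : ℕ} {m q : Fin nq → ℝ}

lemma sum_filter_lt_eq {n : ℕ} (i : Fin n) (f : ℕ → ℝ) :
    ∑ j ∈ Finset.univ.filter (fun j : Fin n => j < i), f (j:ℕ)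
      = ∑ k ∈ Finset.range (i:ℕ), f k := by
  rw [Finset.sum_filter]
  have h1 : ∀ j : Fin n, (if j < i then f (j:ℕ) else 0)
      = (fun k => if k < (i:ℕ) then f k else 0) (j:ℕ) := by
    intro j
    simp only [Fin.lt_def]
  simp only [h1]
  rw [Fin.sum_univ_eq_sum_range (fun k => if k < (i:ℕ) then f k else 0) n]
  rw [← Finset.sum_filter]
  congr 1
  ext k
  simp only [Finset.mem_filter, Finset.mem_range]
  have := i.isLt
  omega

lemma q_sep (hφ : 1 < φ) (hnp : 0 < np)
    (hm : ∀ i, m i = ((np + 1 : ℝ) / (φ - 1)) * ((2*φ - 1)/(φ - 1)) ^ (i:ℕ))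
    (hq : ∀ i, q i ∈ Set.Ioc (m i - (⌈m i⌉ : ℝ)/φ) (m i)) :
    (∀ i, 0 ≤ q i) ∧ ∀ sb sb' : Fin nq → Bool, bval sb' < bval sb →
      totalVal q sb' + np * (1/φ) < totalVal q sb := by
  have hφ0 : (0:ℝ) < φ := lt_trans one_pos hφ
  have hφ1 : (0:ℝ) < φ - 1 := by linarith
  set r : ℝ := (2*φ - 1)/(φ - 1) with hr
  have hr1 : 1 < r := by
    rw [hr, lt_div_iff₀ hφ1]
    linarith
  have hnp1 : (2:ℝ) ≤ (np:ℝ) + 1 := by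
    have h : (1:ℝ) ≤ (np:ℝ) := by exact_mod_cast hnp
    linarith
  have qlb : ∀ i : Fin nq, (((np:ℝ)+1) * r^(i:ℕ) - 1)/φ < q i := by
    intro i
    have h1 : (⌈m i⌉ : ℝ) < m i + 1 := Int.ceil_lt_add_one _
    have h2 : (⌈m i⌉ : ℝ)/φ < (m i + 1)/φ := (div_lt_div_iff_of_pos_right hφ0).mpr h1
    have h3 : m i - (m i + 1)/φ < q i := lt_of_lt_of_le (by linarith) (le_of_lt (hq i).1)
    have hmi : (φ - 1) * m i = ((np:ℝ)+1) * r^(i:ℕ) := by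
      rw [hm i]
      field_simp
    have h4 : m i - (m i + 1)/φ = ((φ - 1) * m i - 1)/φ := by
      field_simp
      ring
    rw [hmi] at h4
    linarith [h4 ▸ h3]
  have qpos : ∀ i, 0 ≤ q i := by
    intro i
    have h5 : (1:ℝ) ≤ r^(i:ℕ) := one_le_pow₀ (le_of_lt hr1)
    have h6 : (2:ℝ) ≤ ((np:ℝ)+1) * r^(i:ℕ) := by nlinarith
    have := qlb i
    have h7 : (0:ℝ) ≤ (((np:ℝ)+1) * r^(i:ℕ) - 1)/φ := div_nonneg (by linarith) hφ0.le
    linarith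
  refine ⟨qpos, fun sb sb' hlt => ?_⟩
  obtain ⟨i, hi1, hi2, hi3⟩ := exists_top_diff hlt
  -- sum of q over indices below i is small
  have hsum : ∑ j ∈ Finset.univ.filter (fun j : Fin nq => j < i), q j
      ≤ ((np:ℝ)+1) * (r^(i:ℕ) - 1)/φ := by
    have hstep : ∑ j ∈ Finset.univ.filter (fun j : Fin nq => j < i), q j
        ≤ ∑ j ∈ Finset.univ.filter (fun j : Fin nq => j < i),
            (((np:ℝ)+1)/(φ-1)) * r^(j:ℕ) := by
      refine Finset.sum_le_sum fun j _ => ?_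
      have := (hq j).2
      rw [hm j] at this
      exact this
    have hre : ∑ j ∈ Finset.univ.filter (fun j : Fin nq => j < i),
        (((np:ℝ)+1)/(φ-1)) * r^(j:ℕ)
          = ∑ k ∈ Finset.range (i:ℕ), (((np:ℝ)+1)/(φ-1)) * r^k :=
      sum_filter_lt_eq i (fun k => (((np:ℝ)+1)/(φ-1)) * r^k)
    have hgeom : ∑ k ∈ Finset.range (i:ℕ), r^k = (r^(i:ℕ) - 1)/(r - 1) :=
      geom_sum_eq (ne_of_gt hr1) _
    have hfin : (((np:ℝ)+1)/(φ-1)) * ((r^(i:ℕ) - 1)/(r - 1))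
        = ((np:ℝ)+1) * (r^(i:ℕ) - 1)/φ := by
      rw [hr]
      have hd : (2*φ - 1)/(φ - 1) - 1 = φ/(φ-1) := by field_simp; ring
      rw [hd]
      field_simp
    calc ∑ j ∈ Finset.univ.filter (fun j : Fin nq => j < i), q j
        ≤ _ := hstep
      _ = _ := hre
      _ = (((np:ℝ)+1)/(φ-1)) * ((r^(i:ℕ) - 1)/(r - 1)) := by
          rw [← Finset.mul_sum, hgeom]
      _ = _ := hfin
  -- difference bound
  have hdiff : q i - ∑ j ∈ Finset.univ.filter (fun j : Fin nq => j < i), q j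
      ≤ totalVal q sb - totalVal q sb' := by
    have hd : totalVal q sb - totalVal q sb'
        = ∑ j, ((if sb j then q j else 0) - (if sb' j then q j else 0)) := by
      rw [totalVal, totalVal, ← Finset.sum_sub_distrib]
    rw [hd]
    rw [← Finset.sum_filter_add_sum_filter_not Finset.univ (fun j : Fin nq => j < i)]
    have hins : Finset.univ.filter (fun j : Fin nq => ¬ j < i)
        = insert i (Finset.univ.filter (fun j : Fin nq => i < j)) := by
      ext j
      simp only [Finset.mem_filter, Finset.mem_univ, true_and, Finset.mem_insert,
        Fin.lt_def, not_lt, Fin.ext_iff]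
      omega
    have hnotmem : i ∉ Finset.univ.filter (fun j : Fin nq => i < j) := by
      simp only [Finset.mem_filter, Finset.mem_univ, true_and]
      exact lt_irrefl i
    rw [hins, Finset.sum_insert hnotmem]
    have hzero : ∑ j ∈ Finset.univ.filter (fun j : Fin nq => i < j),
        ((if sb j then q j else 0) - (if sb' j then q j else 0)) = 0 := by
      refine Finset.sum_eq_zero fun j hj => ?_
      rw [hi3 j (Finset.mem_filter.mp hj).2]
      ring
    rw [hi1, hi2, hzero]
    simp only [if_pos, Bool.false_eq_true, if_false, sub_zero, add_zero]
    have hlb : ∀ j ∈ Finset.univ.filter (fun j : Fin nq => j < i),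
        -(q j) ≤ (if sb j then q j else 0) - (if sb' j then q j else 0) := by
      intro j _
      have := qpos j
      split <;> split <;> simp <;> linarith
    have := Finset.sum_le_sum hlb
    rw [Finset.sum_neg_distrib] at this
    linarith
  have hfinal : (((np:ℝ)+1) * r^(i:ℕ) - 1)/φ - ((np:ℝ)+1) * (r^(i:ℕ) - 1)/φ
      = (np:ℝ)/φ := by
    field_simp
    ring
  have hq1 := qlb i
  have : (np:ℝ)/φ < totalVal q sb - totalVal q sb' := by
    calc (np:ℝ)/φ = _ := hfinal.symm
      _ < q i - ∑ j ∈ Finset.univ.filter (fun j : Fin nq => j < i), q j := by linarith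
      _ ≤ _ := hdiff
  have hnd : (np:ℝ) * (1/φ) = (np:ℝ)/φ := by ring
  linarith [hnd]

end Qpart

section Embed

variable {φ : ℝ} {np nq : ℕ} {m q : Fin nq → ℝ}

lemma isRec_append (hφ : 1 < φ) (hnp : 0 < np)
    (hm : ∀ i, m i = ((np + 1 : ℝ) / (φ - 1)) * ((2*φ - 1)/(φ - 1)) ^ (i:ℕ))
    (hq : ∀ i, q i ∈ Set.Ioc (m i - (⌈m i⌉ : ℝ)/φ) (m i))
    {p : Fin np → ℝ} (hp : ∀ i, p i ∈ Set.Icc 0 (1/φ))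
    {sa : Fin np → Bool} (hsa : isRec p sa) (sb : Fin nq → Bool) :
    isRec (Fin.append p q) (Fin.append sa sb) := by
  obtain ⟨hqpos, hsep⟩ := q_sep hφ hnp hm hq
  intro s' hlt
  set sa' : Fin np → Bool := fun i => s' (Fin.castAdd nq i) with hsa'
  set sb' : Fin nq → Bool := fun j => s' (Fin.natAdd np j) with hsb'
  have hs' : s' = Fin.append sa' sb' := append_decomp s'
  rw [hs'] at hlt ⊢
  rw [bval_append, bval_append] at hlt
  rw [totalVal_append, totalVal_append]
  have hba := bval_lt sa
  have hba' := bval_lt sa'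
  rcases lt_trichotomy (bval sb') (bval sb) with hbb | hbb | hbb
  · have hs := hsep sb sb' hbb
    have h1 : totalVal p sa' ≤ np * (1/φ) := by
      refine le_trans (totalVal_le_sum (fun i => (hp i).1) sa') ?_
      have h2 := Finset.sum_le_card_nsmul Finset.univ p (1/φ) (fun i _ => (hp i).2)
      rw [Finset.card_univ, Fintype.card_fin, nsmul_eq_mul] at h2
      exact h2
    have h3 : 0 ≤ totalVal p sa := totalVal_nonneg (fun i => (hp i).1) sa
    linarith
  · have heq : sb' = sb := bval_injective hbb
    rw [heq] at hlt ⊢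
    have h4 : bval sa' < bval sa := by omega
    have := hsa sa' h4
    linarith
  · exfalso
    have h5 : 2 ^ np * (bval sb + 1) ≤ 2 ^ np * bval sb' :=
      Nat.mul_le_mul_left _ (by omega)
    rw [Nat.mul_add, Nat.mul_one] at h5
    omega

lemma two_pow_mul_totCnt_le (hφ : 1 < φ) (hnp : 0 < np)
    (hm : ∀ i, m i = ((np + 1 : ℝ) / (φ - 1)) * ((2*φ - 1)/(φ - 1)) ^ (i:ℕ))
    (hq : ∀ i, q i ∈ Set.Ioc (m i - (⌈m i⌉ : ℝ)/φ) (m i))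
    {p : Fin np → ℝ} (hp : ∀ i, p i ∈ Set.Icc 0 (1/φ)) :
    ((2:ℝ≥0∞)) ^ nq * (totCnt p : ℝ≥0∞)
      ≤ ((paretoSet Set.univ (fun i : Fin (np + nq) => (2:ℝ) ^ ((i:ℕ)+1))
          (Fin.append p q)).ncard : ℝ≥0∞) := by
  set F : Finset (Fin (np + nq) → Bool) :=
    ((Finset.univ.filter (fun sa : Fin np → Bool => isRec p sa)) ×ˢ
      (Finset.univ : Finset (Fin nq → Bool))).image (fun z => Fin.append z.1 z.2) with hF
  have hinj : Set.InjOn (fun z : (Fin np → Bool) × (Fin nq → Bool) => Fin.append z.1 z.2)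
      ↑((Finset.univ.filter (fun sa : Fin np → Bool => isRec p sa)) ×ˢ
        (Finset.univ : Finset (Fin nq → Bool))) := by
    rintro ⟨a1, b1⟩ - ⟨a2, b2⟩ - heq
    have h1 : a1 = a2 := by
      funext i
      have h := congrFun heq (Fin.castAdd nq i)
      simp only at h
      rwa [Fin.append_left, Fin.append_left] at h
    have h2 : b1 = b2 := by
      funext j
      have h := congrFun heq (Fin.natAdd np j)
      simp only at h
      rwa [Fin.append_right, Fin.append_right] at h
    simp [h1, h2]
  have hcard : F.card = totCnt p * 2 ^ nq := by
    rw [hF, Finset.card_image_of_injOn hinj, Finset.card_product, Finset.card_univ,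
      Fintype.card_fun, Fintype.card_bool, Fintype.card_fin]
    rfl
  have hsub : ↑F ⊆ paretoSet Set.univ (fun i : Fin (np + nq) => (2:ℝ) ^ ((i:ℕ)+1))
      (Fin.append p q) := by
    intro x hx
    simp only [hF, Finset.coe_image, Set.mem_image, Finset.mem_coe, Finset.mem_product,
      Finset.mem_filter, Finset.mem_univ, true_and, and_true] at hx
    obtain ⟨⟨sa, sb⟩, hrec, rfl⟩ := hx
    exact (mem_pareto_iff _ _).mpr (isRec_append hφ hnp hm hq hp hrec sb)
  have hle : F.card ≤ (paretoSet Set.univ (fun i : Fin (np + nq) => (2:ℝ) ^ ((i:ℕ)+1))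
      (Fin.append p q)).ncard := by
    rw [← Set.ncard_coe_finset]
    exact Set.ncard_le_ncard hsub (Set.toFinite _)
  calc (2:ℝ≥0∞) ^ nq * (totCnt p : ℝ≥0∞) = ((totCnt p * 2 ^ nq : ℕ) : ℝ≥0∞) := by
        push_cast
        ring
    _ = (F.card : ℝ≥0∞) := by rw [hcard]
    _ ≤ _ := by exact_mod_cast hle

end Embed

end KnAux

/-- There is a constant `c > 0` such that for every `φ > 1` and
positive integers `n_p, n_q`, with weights `2^1,…,2^{n_p+n_q}`, profits of the
`a`-objects drawn independently and uniformly from `[0,1/φ]`, and arbitrary fixed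
profits `q_i ∈ (m_i - ⌈m_i⌉/φ, m_i]` for the `b`-objects, the expected number of
Pareto optimal solutions is at least `c · n_p² · 2^{n_q}`. -/
theorem expected_pareto_lower_bound : ∃ c : ℝ, 0 < c ∧
    ∀ (φ : ℝ), 1 < φ → ∀ (np nq : ℕ), 0 < np → 0 < nq →
    ∀ m : Fin nq → ℝ,
      (∀ i : Fin nq,
        m i = ((np + 1 : ℝ) / (φ - 1)) * ((2 * φ - 1) / (φ - 1)) ^ (i : ℕ)) →
    ∀ q : Fin nq → ℝ,
      (∀ i, q i ∈ Set.Ioc (m i - (⌈m i⌉ : ℝ) / φ) (m i)) →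
    ENNReal.ofReal (c * np ^ 2 * 2 ^ nq) ≤
      ∫⁻ p : Fin np → ℝ,
        ((paretoSet Set.univ (fun i : Fin (np + nq) => (2 : ℝ) ^ ((i : ℕ) + 1))
            (Fin.append p q)).ncard : ENNReal)
        ∂(Measure.pi fun _ : Fin np => unifOn (Set.Icc 0 (1 / φ))) := by
  refine ⟨1/8, by norm_num, ?_⟩
  intro φ hφ np nq hnp hnq m hm q hq
  have hφ0 : (0:ℝ) < φ := lt_trans one_pos hφ
  haveI := KnAux.isProb hφ
  have hkey := KnAux.key2 hφ np
  have hchain : ENNReal.ofReal ((1/8 : ℝ) * np^2 * 2^nq)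
      ≤ (2:ENNReal)^nq *
          ∫⁻ p, (KnAux.totCnt p : ENNReal) ∂(Measure.pi fun _ : Fin np => KnAux.μu φ) := by
    calc ENNReal.ofReal ((1/8 : ℝ) * np^2 * 2^nq)
        ≤ ENNReal.ofReal ((2:ℝ)^nq * (1 + np*(np+3)/8)) := by
          apply ENNReal.ofReal_le_ofReal
          have h1 : (0:ℝ) ≤ (np:ℝ) := Nat.cast_nonneg np
          have h2 : (0:ℝ) < 2^nq := by positivity
          have h3 : (1/8:ℝ) * np^2 ≤ 1 + np*(np+3)/8 := by nlinarith
          nlinarith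
      _ = (2:ENNReal)^nq * ENNReal.ofReal (1 + np*(np+3)/8) := by
          rw [ENNReal.ofReal_mul (by positivity)]
          congr 1
          rw [ENNReal.ofReal_pow (by norm_num : (0:ℝ) ≤ 2)]
          norm_num
      _ ≤ _ := mul_le_mul_right hkey _
  refine le_trans hchain ?_
  rw [← lintegral_const_mul _ KnAux.measurable_totCnt]
  refine lintegral_mono_ae ?_
  filter_upwards [KnAux.ae_box hφ np] with p hp
  exact KnAux.two_pow_mul_totCnt_le hφ hnp hm hq hp
end

section
/- Let φ > 1 be real, n_p, n_q positive integers, and m_i = ((n_p+1)/(φ-1)) · ((2φ-1)/(φ-1))^{i-1} for i = 1,...,n_q. Then Σ_{i=1}^{n_q} ⌈m_i⌉ ≤ n_q + ((n_p+1)/φ) · ((2φ-1)/(φ-1))^{n_q}. -/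
open Finset

/-- With `m_i = ((n_p+1)/(φ-1))·((2φ-1)/(φ-1))^(i-1)`,
`Σ_{i=1}^{n_q} ⌈m_i⌉ ≤ n_q + ((n_p+1)/φ)·((2φ-1)/(φ-1))^{n_q}`. -/
theorem count_split_objects (φ : ℝ) (hφ : 1 < φ) (np nq : ℕ) (hnp : 0 < np)
    (hnq : 0 < nq) (m : ℕ → ℝ)
    (hm : ∀ i, m i = ((np + 1 : ℝ) / (φ - 1)) * ((2 * φ - 1) / (φ - 1)) ^ (i - 1)) :
    ∑ i ∈ Finset.Icc 1 nq, (⌈m i⌉ : ℝ) ≤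
      nq + ((np + 1 : ℝ) / φ) * ((2 * φ - 1) / (φ - 1)) ^ nq := by
  set r : ℝ := (2 * φ - 1) / (φ - 1) with hr
  have h1 : (0:ℝ) < φ - 1 := by linarith
  have hφ0 : (0:ℝ) < φ := by linarith
  have hrgt : 1 < r := by
    rw [hr, lt_div_iff₀ h1]; linarith
  have hstep1 : ∑ i ∈ Finset.Icc 1 nq, (⌈m i⌉ : ℝ) ≤
      ∑ i ∈ Finset.Icc 1 nq, (m i + 1) := by
    apply Finset.sum_le_sum
    intro i _
    exact le_of_lt (Int.ceil_lt_add_one (m i))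
  have hcard : (Finset.Icc 1 nq).card = nq := by
    rw [Nat.card_Icc]; omega
  have hsplit : ∑ i ∈ Finset.Icc 1 nq, (m i + 1) =
      (∑ i ∈ Finset.Icc 1 nq, m i) + nq := by
    rw [Finset.sum_add_distrib, Finset.sum_const, hcard, nsmul_eq_mul, mul_one]
  have hgeom : ∑ i ∈ Finset.Icc 1 nq, m i =
      ((np + 1 : ℝ) / (φ - 1)) * ((r ^ nq - 1) / (r - 1)) := by
    have h2 : ∑ i ∈ Finset.Icc 1 nq, m i =
        ((np + 1 : ℝ) / (φ - 1)) * ∑ i ∈ Finset.Icc 1 nq, r ^ (i - 1) := by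
      rw [Finset.mul_sum]
      exact Finset.sum_congr rfl (fun i _ => hm i)
    rw [h2]
    congr 1
    rw [← geom_sum_eq (ne_of_gt hrgt), ← Finset.Ico_add_one_right_eq_Icc, Finset.sum_Ico_eq_sum_range]
    simp
  have hrm1 : r - 1 = φ / (φ - 1) := by
    rw [hr]; field_simp; ring
  have hfinal : ((np + 1 : ℝ) / (φ - 1)) * ((r ^ nq - 1) / (r - 1)) ≤
      ((np + 1 : ℝ) / φ) * r ^ nq := by
    rw [hrm1]
    have key : ((np + 1 : ℝ) / (φ - 1)) * ((r ^ nq - 1) / (φ / (φ - 1))) =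
        ((np + 1 : ℝ) / φ) * (r ^ nq - 1) := by
      field_simp
    rw [key]
    have hnp1 : (0:ℝ) ≤ (np + 1 : ℝ) / φ := by positivity
    nlinarith [hnp1]
  calc ∑ i ∈ Finset.Icc 1 nq, (⌈m i⌉ : ℝ)
      ≤ (∑ i ∈ Finset.Icc 1 nq, m i) + nq := by rw [← hsplit]; exact hstep1
    _ ≤ ((np + 1 : ℝ) / φ) * r ^ nq + nq := by rw [hgeom]; linarith
    _ = nq + ((np + 1 : ℝ) / φ) * r ^ nq := by ring
end

section
/- Let d ≥ 2 be an integer, φ ≥ 2d a real, and n_q ≥ 1 an integer. Let m_i = (d/(φ+d))·((2φ/(φ−d))^i − 1) for i ≥ 0. Then Σ_{i=1}^{n_q−1} ( d·(m_i+1)/φ + m_i ) + (d−1)·(m_{n_q}+1)/φ ≤ m_{n_q} − ⌈m_{n_q}⌉/φ. -/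
open Finset

/-- With `m_i = (d/(φ+d))·((2φ/(φ-d))^i - 1)`, `d ≥ 2`, `φ ≥ 2d`,
`Σ_{i=1}^{n_q-1}(d(m_i+1)/φ + m_i) + (d-1)(m_{n_q}+1)/φ ≤ m_{n_q} - ⌈m_{n_q}⌉/φ`. -/
theorem multi_profit_bound (d : ℕ) (hd : 2 ≤ d) (φ : ℝ) (hφ : 2 * d ≤ φ)
    (nq : ℕ) (hnq : 1 ≤ nq) (m : ℕ → ℝ)
    (hm : ∀ i, m i = ((d : ℝ) / (φ + d)) * ((2 * φ / (φ - d)) ^ i - 1)) :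
    (∑ i ∈ Finset.Icc 1 (nq - 1), ((d : ℝ) * (m i + 1) / φ + m i)) +
        ((d : ℝ) - 1) * (m nq + 1) / φ ≤
      m nq - (⌈m nq⌉ : ℝ) / φ := by
  have hd2 : (2:ℝ) ≤ (d:ℝ) := by exact_mod_cast hd
  have hφ0 : (0:ℝ) < φ := by nlinarith
  have hφd : (0:ℝ) < φ - d := by nlinarith
  have hφd' : (0:ℝ) < φ + d := by nlinarith
  have hr1 : 1 < 2 * φ / (φ - d) := by
    rw [lt_div_iff₀ hφd]; nlinarith
  have hrne : (2 * φ / (φ - d)) ≠ 1 := ne_of_gt hr1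
  have hterm : ∀ i, (d : ℝ) * (m i + 1) / φ + m i
      = ((d:ℝ)/φ) * (2 * φ / (φ - d)) ^ i := by
    intro i
    rw [hm i, div_pow]
    have hpow : (φ - d) ^ i ≠ 0 := pow_ne_zero _ hφd.ne'
    field_simp
    ring
  have h1 : nq - 1 + 1 = nq := by omega
  have hIcc : Finset.Icc 1 (nq - 1) = Finset.Ico 1 nq := by
    rw [← Finset.Ico_add_one_right_eq_Icc, h1]
  rw [hIcc]
  have hsum : (∑ i ∈ Finset.Ico 1 nq, ((d : ℝ) * (m i + 1) / φ + m i))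
      = ((d:ℝ)/φ) * (((2 * φ / (φ - d)) ^ nq - (2 * φ / (φ - d)) ^ 1)
          / (2 * φ / (φ - d) - 1)) := by
    rw [Finset.sum_congr rfl (fun i _ => hterm i), ← Finset.mul_sum,
      geom_sum_Ico hrne hnq]
  rw [hsum]
  have hkey : ((d:ℝ)/φ) * (((2 * φ / (φ - d)) ^ nq - (2 * φ / (φ - d)) ^ 1)
          / (2 * φ / (φ - d) - 1)) + ((d : ℝ) - 1) * (m nq + 1) / φ
      = m nq - (m nq + 1) / φ := by
    have hstep : 2 * φ / (φ - (d:ℝ)) - 1 = (φ + d) / (φ - d) := by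
      field_simp
      ring
    rw [hm nq, pow_one, hstep, div_pow]
    have hpow : (φ - (d:ℝ)) ^ nq ≠ 0 := pow_ne_zero _ hφd.ne'
    generalize (2 * φ) ^ nq / (φ - (d:ℝ)) ^ nq = t
    rw [div_div_eq_mul_div]
    field_simp
    ring
  rw [hkey]
  have hceil : (⌈m nq⌉ : ℝ) ≤ m nq + 1 := le_of_lt (Int.ceil_lt_add_one _)
  have hdiv : (⌈m nq⌉ : ℝ) / φ ≤ (m nq + 1) / φ := by gcongr
  linarith
end

section
/- Let d ≥ 2 be an integer, φ ≥ 2d a real, n_q ≥ 1 an integer, and d̂ := ⌈d/2⌉. Let m_0 = 0 and m_i = (1/(φ−d))·Σ_{l=0}^{i−1}(m_l(φ+d)+d). For i = 1,...,n_q and j = 1,...,d let b_{i,j} be an object with weight 2^i/d̂ and profit vector q_{i,j} ∈ ℝ^d whose j-th coordinate lies in (m_i − ⌈m_i⌉/φ, m_i] and whose other coordinates lie in [0, ⌈m_i⌉/φ]. Let Ŝ := { x ∈ {0,1}^d : H(x) ∈ {0, d̂} } where H(x) is the number of ones in x, and let the solution set be S := Ŝ^{n_q}. Then every solution s ∈ S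 is Pareto optimal for the (d+1)-dimensional knapsack problem K_S({ b_{i,j} : i = 1,...,n_q, j = 1,...,d }). -/
open MeasureTheory Finset

/-- Multi-criteria domination: `s'` is no heavier, has no smaller profit in each of
the `d` profit criteria, and is strictly better in at least one of the `d+1` criteria. -/
def dominatesD {ι : Type*} [Fintype ι] {d : ℕ} (w : ι → ℝ) (P : ι → Fin d → ℝ)
    (s' s : ι → Bool) : Prop :=
  totalVal w s' ≤ totalVal w s ∧
    (∀ j, totalVal (fun i => P i j) s ≤ totalVal (fun i => P i j) s') ∧
    (totalVal w s' < totalVal w s ∨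
      ∃ j, totalVal (fun i => P i j) s < totalVal (fun i => P i j) s')

/-- Pareto set of the `(d+1)`-dimensional knapsack problem with solution set `S`,
weights `w` and profit vectors `P`. -/
def paretoSetD {ι : Type*} [Fintype ι] {d : ℕ} (S : Set (ι → Bool)) (w : ι → ℝ)
    (P : ι → Fin d → ℝ) : Set (ι → Bool) :=
  {s ∈ S | ∀ s' ∈ S, ¬ dominatesD w P s' s}

lemma sum_fin_filter_lt' {n k : ℕ} (hk : k ≤ n) (g : ℕ → ℝ) :
    ∑ i ∈ Finset.univ.filter (fun i : Fin n => (i : ℕ) < k), g (i : ℕ)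
      = ∑ l ∈ Finset.range k, g l := by
  rw [Finset.sum_filter, Fin.sum_univ_eq_sum_range (fun l => if l < k then g l else 0)]
  rw [← Finset.sum_subset (Finset.range_subset_range.2 hk) (fun x _ hx => by
    simp only [Finset.mem_range] at hx; simp [if_neg hx])]
  exact Finset.sum_congr rfl fun l hl => by simp [Finset.mem_range.1 hl]

lemma sum_split_at' {n : ℕ} (I : Fin n) (h : Fin n → ℝ) :
    ∑ i, h i = (∑ i ∈ Finset.univ.filter (fun i : Fin n => (i : ℕ) < (I : ℕ)), h i)
      + h I + ∑ i ∈ Finset.univ.filter (fun i : Fin n => (I : ℕ) < (i : ℕ)), h i := by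
  classical
  rw [← Finset.sum_filter_add_sum_filter_not Finset.univ (fun i : Fin n => (i : ℕ) < (I : ℕ)) h]
  have h1 : Finset.univ.filter (fun i : Fin n => ¬ (i : ℕ) < (I : ℕ))
      = insert I (Finset.univ.filter (fun i : Fin n => (I : ℕ) < (i : ℕ))) := by
    ext i
    simp only [Finset.mem_filter, Finset.mem_univ, true_and, Finset.mem_insert, Fin.ext_iff]
    omega
  rw [h1, Finset.sum_insert (by simp)]
  ring

lemma geom2' : ∀ k : ℕ, ∑ l ∈ Finset.range k, (2:ℝ)^(l+1) = 2^(k+1) - 2 := by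
  intro k; induction k with
  | zero => simp
  | succ n ih => rw [Finset.sum_range_succ, ih]; ring

/-- multi-criteria copy lemma. With `d̂ = ⌈d/2⌉`, objects
`b_{i,j}` (for `i = 1,…,n_q`, `j = 1,…,d`) of weight `2^i/d̂`, whose profit vector
has `j`-th coordinate in `(m_i - ⌈m_i⌉/φ, m_i]` and all other coordinates in
`[0, ⌈m_i⌉/φ]`, and the solution set `S = Ŝ^{n_q}` with
`Ŝ = {x ∈ {0,1}^d : H(x) ∈ {0, d̂}}`, every solution in `S` is Pareto optimal. -/
theorem every_solution_pareto_optimal (d : ℕ) (hd : 2 ≤ d) (φ : ℝ)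
    (hφ : 2 * d ≤ φ) (nq : ℕ) (hnq : 1 ≤ nq)
    (dHat : ℕ) (hdHat : (dHat : ℤ) = ⌈(d : ℚ) / 2⌉)
    (m : ℕ → ℝ) (h0 : m 0 = 0)
    (hrec : ∀ i, 1 ≤ i →
      m i = (1 / (φ - d)) * ∑ l ∈ Finset.range i, (m l * (φ + d) + d))
    (q : Fin nq × Fin d → Fin d → ℝ)
    (hq : ∀ (i : Fin nq) (j : Fin d),
      q (i, j) j ∈ Set.Ioc (m ((i : ℕ) + 1) - (⌈m ((i : ℕ) + 1)⌉ : ℝ) / φ)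
        (m ((i : ℕ) + 1)) ∧
      ∀ k : Fin d, k ≠ j →
        q (i, j) k ∈ Set.Icc 0 ((⌈m ((i : ℕ) + 1)⌉ : ℝ) / φ))
    (S : Set (Fin nq × Fin d → Bool))
    (hS : S = {s | ∀ i : Fin nq,
      (Finset.univ.filter fun j : Fin d => s (i, j)).card = 0 ∨
      (Finset.univ.filter fun j : Fin d => s (i, j)).card = dHat}) :
    ∀ s ∈ S, s ∈ paretoSetD S
      (fun x : Fin nq × Fin d => (2 : ℝ) ^ ((x.1 : ℕ) + 1) / dHat) q := by
  classical
  -- numeric preliminaries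
  have hd2 : (2:ℝ) ≤ d := by exact_mod_cast hd
  have hφd : (d:ℝ) < φ := by linarith
  have hφ0 : (0:ℝ) < φ := by linarith
  have h1 : (1:ℤ) ≤ (dHat:ℤ) := by
    rw [hdHat]
    have : ((0:ℤ):ℚ) < (d:ℚ)/2 := by
      have : (2:ℚ) ≤ (d:ℚ) := by exact_mod_cast hd
      push_cast; linarith
    exact Int.lt_ceil.2 this
  have hdHat1 : 1 ≤ dHat := by exact_mod_cast h1
  have h2 : (dHat:ℤ) + 1 ≤ (d:ℤ) := by
    rw [hdHat]
    have : ⌈(d:ℚ)/2⌉ ≤ (d:ℤ) - 1 := by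
      apply Int.ceil_le.2
      have : (2:ℚ) ≤ (d:ℚ) := by exact_mod_cast hd
      push_cast; linarith
    omega
  have hdHatd : ((dHat:ℝ)) + 1 ≤ (d:ℝ) := by exact_mod_cast h2
  have hdh1 : (1:ℝ) ≤ (dHat:ℝ) := by exact_mod_cast hdHat1
  have hm0 : ∀ i, 0 ≤ m i := by
    intro i
    induction i using Nat.strong_induction_on with
    | _ i ih =>
      rcases Nat.eq_zero_or_pos i with rfl | hi
      · rw [h0]
      · rw [hrec i hi]
        apply mul_nonneg (le_of_lt (one_div_pos.2 (sub_pos.2 hφd)))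
        apply Finset.sum_nonneg
        intro l hl
        have hml := ih l (Finset.mem_range.1 hl)
        have : 0 ≤ m l * (φ + d) := mul_nonneg hml (by linarith)
        linarith
  have hceil_nonneg : ∀ l, (0:ℝ) ≤ ((⌈m l⌉ : ℤ):ℝ) := by
    intro l; exact_mod_cast Int.ceil_nonneg (by exact_mod_cast hm0 l)
  have key : ∀ I, 1 ≤ I →
      ((dHat:ℝ) + 1) * ((⌈m I⌉ : ℤ):ℝ)
        + ∑ l ∈ Finset.range I, (φ * m l + ((dHat:ℝ) - 1) * ((⌈m l⌉ : ℤ):ℝ))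
        ≤ φ * m I := by
    intro I hI
    have hmI : (φ - d) * m I = ∑ l ∈ Finset.range I, (m l * (φ + d) + d) := by
      have hne0 : φ - (d:ℝ) ≠ 0 := by linarith
      rw [hrec I hI]
      field_simp
      exact Finset.sum_congr rfl fun l _ => by ring
    have hφm : φ * m I = (d:ℝ) * m I + ∑ l ∈ Finset.range I, (m l * (φ + d) + d) := by
      rw [← hmI]; ring
    have hsum : ∑ l ∈ Finset.range I, (m l * (φ + d) + d)
        - ∑ l ∈ Finset.range I, (φ * m l + ((dHat:ℝ) - 1) * ((⌈m l⌉ : ℤ):ℝ))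
        = ∑ l ∈ Finset.range I, ((d:ℝ) * m l + d - ((dHat:ℝ) - 1) * ((⌈m l⌉ : ℤ):ℝ)) := by
      rw [← Finset.sum_sub_distrib]
      exact Finset.sum_congr rfl fun l _ => by ring
    have hterm : ∀ l ∈ Finset.range I,
        0 ≤ (d:ℝ) * m l + d - ((dHat:ℝ) - 1) * ((⌈m l⌉ : ℤ):ℝ) := by
      intro l _
      have hc1 : ((⌈m l⌉ : ℤ):ℝ) ≤ m l + 1 := (Int.ceil_lt_add_one (m l)).le
      nlinarith [hm0 l, mul_nonneg (by linarith : (0:ℝ) ≤ (dHat:ℝ) - 1)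
        (by linarith : (0:ℝ) ≤ m l + 1 - ((⌈m l⌉ : ℤ):ℝ)),
        mul_nonneg (by linarith : (0:ℝ) ≤ (d:ℝ) - ((dHat:ℝ) - 1)) (hm0 l)]
    have hbig : (d:ℝ) ≤ ∑ l ∈ Finset.range I,
        ((d:ℝ) * m l + d - ((dHat:ℝ) - 1) * ((⌈m l⌉ : ℤ):ℝ)) := by
      have := Finset.single_le_sum hterm (Finset.mem_range.2 hI)
      simpa [h0] using this
    have hceilI : ((⌈m I⌉ : ℤ):ℝ) ≤ m I + 1 := (Int.ceil_lt_add_one _).le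
    have p1 : ((dHat:ℝ)+1) * ((⌈m I⌉ : ℤ):ℝ) ≤ ((dHat:ℝ)+1) * (m I + 1) :=
      mul_le_mul_of_nonneg_left hceilI (by linarith)
    have p2 : ((dHat:ℝ)+1) * (m I + 1) ≤ (d:ℝ) * m I + d := by
      nlinarith [hm0 I]
    linarith [hsum, hbig, p1, p2, hφm.le, hφm.ge]
  have hsum_nn : ∀ I : ℕ, 0 ≤ ∑ l ∈ Finset.range I,
      (φ * m l + ((dHat:ℝ) - 1) * ((⌈m l⌉ : ℤ):ℝ)) := by
    intro I
    apply Finset.sum_nonneg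
    intro l _
    have := hceil_nonneg l
    have h1 : 0 ≤ φ * m l := mul_nonneg hφ0.le (hm0 l)
    nlinarith [mul_nonneg (by linarith : (0:ℝ) ≤ (dHat:ℝ) - 1) this]
  have hceilm : ∀ I, 1 ≤ I → ((⌈m I⌉ : ℤ):ℝ) ≤ φ * m I := by
    intro I hI
    have hk := key I hI
    have := hsum_nn I
    nlinarith [mul_nonneg (by linarith : (0:ℝ) ≤ (dHat:ℝ)) (hceil_nonneg I)]
  have hCleM : ∀ I, 1 ≤ I → ((⌈m I⌉ : ℤ):ℝ) / φ ≤ m I := by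
    intro I hI
    rw [div_le_iff₀ hφ0]
    have := hceilm I hI
    linarith [this]
  have key2 : ∀ I, 1 ≤ I →
      (dHat:ℝ) * (((⌈m I⌉ : ℤ):ℝ)/φ)
        + ∑ l ∈ Finset.range I, (m l + ((dHat:ℝ) - 1) * (((⌈m l⌉ : ℤ):ℝ)/φ))
        ≤ m I - ((⌈m I⌉ : ℤ):ℝ)/φ := by
    intro I hI
    have hk := key I hI
    have e : ∑ l ∈ Finset.range I, (m l + ((dHat:ℝ) - 1) * (((⌈m l⌉ : ℤ):ℝ)/φ))
        = (∑ l ∈ Finset.range I, (φ * m l + ((dHat:ℝ) - 1) * ((⌈m l⌉ : ℤ):ℝ))) / φ := by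
      rw [Finset.sum_div]
      refine Finset.sum_congr rfl fun l _ => ?_
      field_simp
    rw [e]
    have e1 : (dHat:ℝ) * (((⌈m I⌉ : ℤ):ℝ)/φ)
        + (∑ l ∈ Finset.range I, (φ * m l + ((dHat:ℝ) - 1) * ((⌈m l⌉ : ℤ):ℝ))) / φ
        = ((dHat:ℝ) * ((⌈m I⌉ : ℤ):ℝ)
          + ∑ l ∈ Finset.range I, (φ * m l + ((dHat:ℝ) - 1) * ((⌈m l⌉ : ℤ):ℝ))) / φ := by
      ring
    have e2 : m I - ((⌈m I⌉ : ℤ):ℝ)/φ = (φ * m I - ((⌈m I⌉ : ℤ):ℝ)) / φ := by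
      field_simp
    rw [e1, e2]
    apply div_le_div_of_nonneg_right ?_ hφ0.le
    linarith
  -- main argument
  intro s hs
  refine ⟨hs, ?_⟩
  intro s' hs'mem hdom
  obtain ⟨hw, hp, hstrict⟩ := hdom
  rw [hS, Set.mem_setOf_eq] at hs hs'mem
  have hne : s' ≠ s := by
    rintro rfl
    rcases hstrict with h | ⟨j, h⟩ <;> exact lt_irrefl _ h
  obtain ⟨x0, hx0⟩ := Function.ne_iff.1 hne
  set D : Finset (Fin nq) :=
    Finset.univ.filter (fun i : Fin nq => ∃ j, s' (i, j) ≠ s (i, j)) with hD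
  have hDne : D.Nonempty :=
    ⟨x0.1, Finset.mem_filter.2 ⟨Finset.mem_univ _, ⟨x0.2, hx0⟩⟩⟩
  obtain ⟨I, hImem, hImax⟩ : ∃ I ∈ D, ∀ i ∈ D, i ≤ I :=
    ⟨D.max' hDne, D.max'_mem hDne, fun i hi => D.le_max' i hi⟩
  have hIdiff : ∃ j, s' (I, j) ≠ s (I, j) := (Finset.mem_filter.1 hImem).2
  have hgt : ∀ i : Fin nq, (I:ℕ) < (i:ℕ) → ∀ k, s' (i, k) = s (i, k) := by
    intro i hi k
    by_contra hne2
    have hmem : i ∈ D := Finset.mem_filter.2 ⟨Finset.mem_univ _, ⟨k, hne2⟩⟩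
    exact absurd (hImax i hmem) (not_le.2 (Fin.lt_def.2 hi))
  by_cases hA : ∃ j : Fin d, s (I, j) = true ∧ s' (I, j) = false
  · -- profit contradiction
    obtain ⟨j, hsj, hs'j⟩ := hA
    have hPj := hp j
    have hPs : totalVal (fun x => q x j) s
        = ∑ i : Fin nq, ∑ k : Fin d, (if s (i,k) then q (i,k) j else 0) := by
      simp only [totalVal, Fintype.sum_prod_type]
    have hPs' : totalVal (fun x => q x j) s'
        = ∑ i : Fin nq, ∑ k : Fin d, (if s' (i,k) then q (i,k) j else 0) := by
      simp only [totalVal, Fintype.sum_prod_type]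
    rw [hPs, hPs', sum_split_at' I _, sum_split_at' I _] at hPj
    have hq0 : ∀ (i : Fin nq) (k : Fin d), 0 ≤ q (i,k) j := by
      intro i k
      by_cases h : j = k
      · subst h
        have h1 := (hq i j).1.1
        have h2 := hCleM ((i:ℕ)+1) (Nat.le_add_left 1 _)
        linarith
      · exact ((hq i k).2 j h).1
    have hb1 : ∑ i ∈ Finset.univ.filter (fun i : Fin nq => (I:ℕ) < (i:ℕ)),
          (∑ k : Fin d, (if s' (i,k) then q (i,k) j else 0))
        = ∑ i ∈ Finset.univ.filter (fun i : Fin nq => (I:ℕ) < (i:ℕ)),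
          (∑ k : Fin d, (if s (i,k) then q (i,k) j else 0)) := by
      refine Finset.sum_congr rfl fun i hi => ?_
      have hi' := (Finset.mem_filter.1 hi).2
      exact Finset.sum_congr rfl fun k _ => by rw [hgt i hi' k]
    have hb2 : (∑ k : Fin d, (if s' (I,k) then q (I,k) j else 0))
        ≤ (dHat:ℝ) * (((⌈m ((I:ℕ)+1)⌉ : ℤ):ℝ)/φ) := by
      have hc0 : 0 ≤ ((⌈m ((I:ℕ)+1)⌉ : ℤ):ℝ)/φ := div_nonneg (hceil_nonneg _) hφ0.le
      have e1 : (∑ k : Fin d, (if s' (I,k) then q (I,k) j else 0))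
          = ∑ k ∈ Finset.univ.filter (fun k : Fin d => s' (I,k)), q (I,k) j :=
        (Finset.sum_filter _ _).symm
      have hTcard : (((Finset.univ.filter (fun k : Fin d => s' (I,k))).card : ℕ) : ℝ)
          ≤ (dHat:ℝ) := by
        rcases hs'mem I with h | h <;> simp [h]
      rw [e1]
      calc ∑ k ∈ Finset.univ.filter (fun k : Fin d => s' (I,k)), q (I,k) j
          ≤ ∑ _k ∈ Finset.univ.filter (fun k : Fin d => s' (I,k)),
              ((⌈m ((I:ℕ)+1)⌉ : ℤ):ℝ)/φ := by
            refine Finset.sum_le_sum fun k hk => ?_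
            have hk' : s' (I,k) = true := (Finset.mem_filter.1 hk).2
            have hkj : k ≠ j := by
              rintro rfl; rw [hs'j] at hk'; exact Bool.noConfusion hk'
            exact ((hq I k).2 j (Ne.symm hkj)).2
        _ = ((Finset.univ.filter (fun k : Fin d => s' (I,k))).card : ℝ)
              * (((⌈m ((I:ℕ)+1)⌉ : ℤ):ℝ)/φ) := by
            rw [Finset.sum_const, nsmul_eq_mul]
        _ ≤ (dHat:ℝ) * (((⌈m ((I:ℕ)+1)⌉ : ℤ):ℝ)/φ) :=
            mul_le_mul_of_nonneg_right hTcard hc0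
    have hgb : ∀ i : Fin nq,
        (∑ k : Fin d, (if s' (i,k) then q (i,k) j else 0))
          ≤ m ((i:ℕ)+1) + ((dHat:ℝ) - 1) * (((⌈m ((i:ℕ)+1)⌉ : ℤ):ℝ)/φ) := by
      intro i
      have hc0 : 0 ≤ ((⌈m ((i:ℕ)+1)⌉ : ℤ):ℝ)/φ := div_nonneg (hceil_nonneg _) hφ0.le
      have hcM : ((⌈m ((i:ℕ)+1)⌉ : ℤ):ℝ)/φ ≤ m ((i:ℕ)+1) :=
        hCleM ((i:ℕ)+1) (Nat.le_add_left 1 _)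
      have e1 : (∑ k : Fin d, (if s' (i,k) then q (i,k) j else 0))
          = ∑ k ∈ Finset.univ.filter (fun k : Fin d => s' (i,k)), q (i,k) j :=
        (Finset.sum_filter _ _).symm
      have hTcard : (((Finset.univ.filter (fun k : Fin d => s' (i,k))).card : ℕ) : ℝ)
          ≤ (dHat:ℝ) := by
        rcases hs'mem i with h | h <;> simp [h]
      have e2 : ∑ k ∈ Finset.univ.filter (fun k : Fin d => s' (i,k)), q (i,k) j
          ≤ ∑ k ∈ Finset.univ.filter (fun k : Fin d => s' (i,k)),
              (if k = j then m ((i:ℕ)+1) else ((⌈m ((i:ℕ)+1)⌉ : ℤ):ℝ)/φ) := by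
        refine Finset.sum_le_sum fun k hk => ?_
        by_cases h : k = j
        · subst h; rw [if_pos rfl]; exact (hq i k).1.2
        · rw [if_neg h]; exact ((hq i k).2 j (Ne.symm h)).2
      have e3 : ∑ k ∈ Finset.univ.filter (fun k : Fin d => s' (i,k)),
            (if k = j then m ((i:ℕ)+1) else ((⌈m ((i:ℕ)+1)⌉ : ℤ):ℝ)/φ)
          = ((Finset.univ.filter (fun k : Fin d => s' (i,k))).card : ℝ)
              * (((⌈m ((i:ℕ)+1)⌉ : ℤ):ℝ)/φ)
            + (if j ∈ Finset.univ.filter (fun k : Fin d => s' (i,k))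
                then m ((i:ℕ)+1) - ((⌈m ((i:ℕ)+1)⌉ : ℤ):ℝ)/φ else 0) := by
        calc ∑ k ∈ Finset.univ.filter (fun k : Fin d => s' (i,k)),
              (if k = j then m ((i:ℕ)+1) else ((⌈m ((i:ℕ)+1)⌉ : ℤ):ℝ)/φ)
            = ∑ k ∈ Finset.univ.filter (fun k : Fin d => s' (i,k)),
              (((⌈m ((i:ℕ)+1)⌉ : ℤ):ℝ)/φ
                + (if k = j then m ((i:ℕ)+1) - ((⌈m ((i:ℕ)+1)⌉ : ℤ):ℝ)/φ else 0)) := by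
              refine Finset.sum_congr rfl fun k _ => ?_
              split_ifs <;> ring
          _ = _ := by
              rw [Finset.sum_add_distrib, Finset.sum_const, nsmul_eq_mul,
                Finset.sum_ite_eq' (Finset.univ.filter (fun k : Fin d => s' (i,k))) j
                  (fun _ => m ((i:ℕ)+1) - ((⌈m ((i:ℕ)+1)⌉ : ℤ):ℝ)/φ)]
      have e4 : (if j ∈ Finset.univ.filter (fun k : Fin d => s' (i,k))
            then m ((i:ℕ)+1) - ((⌈m ((i:ℕ)+1)⌉ : ℤ):ℝ)/φ else 0)
          ≤ m ((i:ℕ)+1) - ((⌈m ((i:ℕ)+1)⌉ : ℤ):ℝ)/φ := by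
        split <;> linarith
      have e5 : ((Finset.univ.filter (fun k : Fin d => s' (i,k))).card : ℝ)
            * (((⌈m ((i:ℕ)+1)⌉ : ℤ):ℝ)/φ)
          ≤ (dHat:ℝ) * (((⌈m ((i:ℕ)+1)⌉ : ℤ):ℝ)/φ) :=
        mul_le_mul_of_nonneg_right hTcard hc0
      rw [e1]
      have := e2.trans (le_of_eq e3)
      linarith [this, e4, e5]
    have hb3s : ∑ i ∈ Finset.univ.filter (fun i : Fin nq => (i:ℕ) < (I:ℕ)),
          (∑ k : Fin d, (if s' (i,k) then q (i,k) j else 0))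
        ≤ ∑ i ∈ Finset.univ.filter (fun i : Fin nq => (i:ℕ) < (I:ℕ)),
          (m ((i:ℕ)+1) + ((dHat:ℝ) - 1) * (((⌈m ((i:ℕ)+1)⌉ : ℤ):ℝ)/φ)) :=
      Finset.sum_le_sum fun i _ => hgb i
    have hb4 : q (I,j) j ≤ ∑ k : Fin d, (if s (I,k) then q (I,k) j else 0) := by
      have hnn : ∀ k ∈ Finset.univ, (0:ℝ) ≤ (if s (I,k) then q (I,k) j else 0) := by
        intro k _
        split
        · exact hq0 I k
        · exact le_refl 0
      have := Finset.single_le_sum hnn (Finset.mem_univ j)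
      rwa [if_pos hsj] at this
    have hb5 : (0:ℝ) ≤ ∑ i ∈ Finset.univ.filter (fun i : Fin nq => (i:ℕ) < (I:ℕ)),
          (∑ k : Fin d, (if s (i,k) then q (i,k) j else 0)) := by
      refine Finset.sum_nonneg fun i _ => Finset.sum_nonneg fun k _ => ?_
      split
      · exact hq0 i k
      · exact le_refl 0
    have hb6 : (dHat:ℝ) * (((⌈m ((I:ℕ)+1)⌉ : ℤ):ℝ)/φ)
        + ∑ i ∈ Finset.univ.filter (fun i : Fin nq => (i:ℕ) < (I:ℕ)),
            (m ((i:ℕ)+1) + ((dHat:ℝ) - 1) * (((⌈m ((i:ℕ)+1)⌉ : ℤ):ℝ)/φ))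
        ≤ m ((I:ℕ)+1) - ((⌈m ((I:ℕ)+1)⌉ : ℤ):ℝ)/φ := by
      have e : ∑ i ∈ Finset.univ.filter (fun i : Fin nq => (i:ℕ) < (I:ℕ)),
            (m ((i:ℕ)+1) + ((dHat:ℝ) - 1) * (((⌈m ((i:ℕ)+1)⌉ : ℤ):ℝ)/φ))
          = ∑ l ∈ Finset.range (I:ℕ),
            (m (l+1) + ((dHat:ℝ) - 1) * (((⌈m (l+1)⌉ : ℤ):ℝ)/φ)) :=
        sum_fin_filter_lt' I.isLt.le
          (fun l => m (l+1) + ((dHat:ℝ) - 1) * (((⌈m (l+1)⌉ : ℤ):ℝ)/φ))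
      rw [e]
      have e2' : ∑ l ∈ Finset.range ((I:ℕ)+1),
            (m l + ((dHat:ℝ) - 1) * (((⌈m l⌉ : ℤ):ℝ)/φ))
          = ∑ l ∈ Finset.range (I:ℕ),
            (m (l+1) + ((dHat:ℝ) - 1) * (((⌈m (l+1)⌉ : ℤ):ℝ)/φ)) := by
        rw [Finset.sum_range_succ']
        simp [h0]
      have hk2 := key2 ((I:ℕ)+1) (Nat.le_add_left 1 _)
      rw [e2'] at hk2
      exact hk2
    have hqgt : m ((I:ℕ)+1) - ((⌈m ((I:ℕ)+1)⌉ : ℤ):ℝ)/φ < q (I,j) j := (hq I j).1.1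
    linarith [hPj, hb1, hb2, hb3s, hb4, hb5, hb6, hqgt]
  · -- weight contradiction
    push_neg at hA
    obtain ⟨j0, hj0⟩ := hIdiff
    have hs0 : s (I, j0) = false := by
      cases hb : s (I, j0)
      · rfl
      · cases hb' : s' (I, j0)
        · exact absurd hb' (hA j0 hb)
        · rw [hb, hb'] at hj0; exact absurd rfl hj0
    have hs'0 : s' (I, j0) = true := by
      cases hb' : s' (I, j0)
      · rw [hs0, hb'] at hj0; exact absurd rfl hj0
      · rfl
    have hsub : (Finset.univ.filter fun k : Fin d => s (I,k))
        ⊆ (Finset.univ.filter fun k : Fin d => s' (I,k)) := by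
      intro k hk
      have hk' := (Finset.mem_filter.1 hk).2
      refine Finset.mem_filter.2 ⟨Finset.mem_univ _, ?_⟩
      have hak := hA k hk'
      cases hb : s' (I,k)
      · exact absurd hb hak
      · rfl
    have hcs' : (Finset.univ.filter fun k : Fin d => s' (I,k)).card = dHat := by
      rcases hs'mem I with h | h
      · exfalso
        have hj0mem : j0 ∈ Finset.univ.filter fun k : Fin d => s' (I,k) :=
          Finset.mem_filter.2 ⟨Finset.mem_univ _, hs'0⟩
        rw [Finset.card_eq_zero] at h
        rw [h] at hj0mem
        exact absurd hj0mem (Finset.notMem_empty j0)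
      · exact h
    have hcs : (Finset.univ.filter fun k : Fin d => s (I,k)).card = 0 := by
      rcases hs I with h | h
      · exact h
      · exfalso
        have hle : (Finset.univ.filter fun k : Fin d => s' (I,k)).card
            ≤ (Finset.univ.filter fun k : Fin d => s (I,k)).card := by rw [h, hcs']
        have heq := Finset.eq_of_subset_of_card_le hsub hle
        have hj0mem : j0 ∈ Finset.univ.filter fun k : Fin d => s' (I,k) :=
          Finset.mem_filter.2 ⟨Finset.mem_univ _, hs'0⟩
        rw [← heq] at hj0mem
        have hcontr := (Finset.mem_filter.1 hj0mem).2
        rw [hs0] at hcontr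
        exact Bool.noConfusion hcontr
    have hdne : (dHat:ℝ) ≠ 0 := by intro h; rw [h] at hdh1; linarith
    have hWs : totalVal (fun x : Fin nq × Fin d => (2:ℝ)^((x.1:ℕ)+1)/dHat) s
        = ∑ i : Fin nq, ∑ k : Fin d,
          (if s (i,k) then (2:ℝ)^((i:ℕ)+1)/(dHat:ℝ) else 0) := by
      simp only [totalVal, Fintype.sum_prod_type]
    have hWs' : totalVal (fun x : Fin nq × Fin d => (2:ℝ)^((x.1:ℕ)+1)/dHat) s'
        = ∑ i : Fin nq, ∑ k : Fin d,
          (if s' (i,k) then (2:ℝ)^((i:ℕ)+1)/(dHat:ℝ) else 0) := by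
      simp only [totalVal, Fintype.sum_prod_type]
    rw [hWs, hWs', sum_split_at' I _, sum_split_at' I _] at hw
    have hwf : ∀ (t : Fin nq × Fin d → Bool) (i : Fin nq),
        (∑ k : Fin d, (if t (i,k) then (2:ℝ)^((i:ℕ)+1)/(dHat:ℝ) else 0))
          = (((Finset.univ.filter fun k : Fin d => t (i,k)).card : ℕ) : ℝ)
            * ((2:ℝ)^((i:ℕ)+1)/(dHat:ℝ)) := by
      intro t i
      rw [← Finset.sum_filter, Finset.sum_const, nsmul_eq_mul]
    have hwfI : (∑ k : Fin d, (if s (I,k) then (2:ℝ)^((I:ℕ)+1)/(dHat:ℝ) else 0)) = 0 := by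
      rw [hwf s I, hcs]
      simp
    have hwgI : (∑ k : Fin d, (if s' (I,k) then (2:ℝ)^((I:ℕ)+1)/(dHat:ℝ) else 0))
        = (2:ℝ)^((I:ℕ)+1) := by
      rw [hwf s' I, hcs']
      field_simp
    have hbB : ∑ i ∈ Finset.univ.filter (fun i : Fin nq => (I:ℕ) < (i:ℕ)),
          (∑ k : Fin d, (if s' (i,k) then (2:ℝ)^((i:ℕ)+1)/(dHat:ℝ) else 0))
        = ∑ i ∈ Finset.univ.filter (fun i : Fin nq => (I:ℕ) < (i:ℕ)),
          (∑ k : Fin d, (if s (i,k) then (2:ℝ)^((i:ℕ)+1)/(dHat:ℝ) else 0)) := by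
      refine Finset.sum_congr rfl fun i hi => ?_
      have hi' := (Finset.mem_filter.1 hi).2
      exact Finset.sum_congr rfl fun k _ => by rw [hgt i hi' k]
    have hblockle : ∀ i : Fin nq,
        (∑ k : Fin d, (if s (i,k) then (2:ℝ)^((i:ℕ)+1)/(dHat:ℝ) else 0))
          ≤ (2:ℝ)^((i:ℕ)+1) := by
      intro i
      rw [hwf s i]
      have hcard : (((Finset.univ.filter fun k : Fin d => s (i,k)).card : ℕ) : ℝ)
          ≤ (dHat:ℝ) := by
        rcases hs i with h | h <;> simp [h]
      have hpos : (0:ℝ) ≤ (2:ℝ)^((i:ℕ)+1)/(dHat:ℝ) := by positivity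
      calc (((Finset.univ.filter fun k : Fin d => s (i,k)).card : ℕ) : ℝ)
            * ((2:ℝ)^((i:ℕ)+1)/(dHat:ℝ))
          ≤ (dHat:ℝ) * ((2:ℝ)^((i:ℕ)+1)/(dHat:ℝ)) :=
            mul_le_mul_of_nonneg_right hcard hpos
        _ = (2:ℝ)^((i:ℕ)+1) := by field_simp
    have hAsum : ∑ i ∈ Finset.univ.filter (fun i : Fin nq => (i:ℕ) < (I:ℕ)),
          (∑ k : Fin d, (if s (i,k) then (2:ℝ)^((i:ℕ)+1)/(dHat:ℝ) else 0))
        ≤ (2:ℝ)^((I:ℕ)+1) - 2 := by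
      calc ∑ i ∈ Finset.univ.filter (fun i : Fin nq => (i:ℕ) < (I:ℕ)),
            (∑ k : Fin d, (if s (i,k) then (2:ℝ)^((i:ℕ)+1)/(dHat:ℝ) else 0))
          ≤ ∑ i ∈ Finset.univ.filter (fun i : Fin nq => (i:ℕ) < (I:ℕ)), (2:ℝ)^((i:ℕ)+1) :=
            Finset.sum_le_sum fun i _ => hblockle i
        _ = ∑ l ∈ Finset.range (I:ℕ), (2:ℝ)^(l+1) :=
            sum_fin_filter_lt' I.isLt.le (fun l => (2:ℝ)^(l+1))
        _ = (2:ℝ)^((I:ℕ)+1) - 2 := geom2' _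
    have hAnn : (0:ℝ) ≤ ∑ i ∈ Finset.univ.filter (fun i : Fin nq => (i:ℕ) < (I:ℕ)),
          (∑ k : Fin d, (if s' (i,k) then (2:ℝ)^((i:ℕ)+1)/(dHat:ℝ) else 0)) := by
      refine Finset.sum_nonneg fun i _ => Finset.sum_nonneg fun k _ => ?_
      split
      · positivity
      · exact le_refl 0
    linarith [hw, hwfI, hwgI, hbB, hAsum, hAnn]
end

section
/- Let d ≥ 2 be an integer, φ ≥ 2d a real, n_q ≥ 1 an integer, and d̂ := ⌈d/2⌉. Let m_0 = 0 and m_i = (1/(φ−d))·Σ_{l=0}^{i−1}(m_l(φ+d)+d), and let the objects b_{i,j} (i = 1,...,n_q, j = 1,...,d) have weights 2^i/d̂ and arbitrary profit vectors q_{i,j} ∈ Q_{i,j}, where Q_{i,j} is the set of vectors in ℝ^d whose j-th coordinate lies in (m_i − ⌈m_i⌉/φ, m_i] and whose other coordinates lie in [0, ⌈m_i⌉/φ]. With solution set S := Ŝ^{n_q}, Ŝ = { x ∈ {0,1}^d : H(x) ∈ {0, d̂} }, the number of Pareto optimal solutions of K_S({ b_{i,j} }) is at least (2^d / d)^{n_q}.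 -/
open MeasureTheory Finset

lemma dHat_facts (d : ℕ) (hd : 2 ≤ d) (dHat : ℕ) (hdHat : (dHat : ℤ) = ⌈(d : ℚ) / 2⌉) :
    d ≤ 2 * dHat ∧ 2 * dHat ≤ d + 1 := by
  have h1 : ((d : ℚ)) / 2 ≤ ((dHat : ℤ) : ℚ) := by rw [hdHat]; exact Int.le_ceil _
  have h2 : ((dHat : ℤ) : ℚ) < (d : ℚ) / 2 + 1 := by rw [hdHat]; exact Int.ceil_lt_add_one _
  have h1' : (d : ℚ) ≤ 2 * dHat := by push_cast at h1 ⊢; linarith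
  have h2' : (2 * dHat : ℚ) < d + 2 := by push_cast at h2 ⊢; linarith
  constructor
  · exact_mod_cast h1'
  · have : ((2 * dHat : ℕ) : ℚ) < ((d + 2 : ℕ) : ℚ) := by push_cast; linarith
    have := (Nat.cast_lt (α := ℚ)).mp this
    omega

lemma choose_bound (d : ℕ) (hd : 2 ≤ d) (dHat : ℕ) (hdHat : (dHat : ℤ) = ⌈(d : ℚ) / 2⌉) :
    2 ^ d ≤ d * Nat.choose d dHat := by
  obtain ⟨hl, hr⟩ := dHat_facts d hd dHat hdHat
  have hsym : d - dHat = d / 2 := by omega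
  have hle : dHat ≤ d := by omega
  have hch : Nat.choose d dHat = Nat.choose d (d / 2) := by
    rw [← Nat.choose_symm hle, hsym]
  rw [hch]
  set C := Nat.choose d (d / 2) with hC
  have hC2 : 2 ≤ C := by
    have := Nat.choose_le_middle 1 d
    rw [Nat.choose_one_right] at this
    omega
  obtain ⟨e, rfl⟩ : ∃ e, d = e + 2 := ⟨d - 2, by omega⟩
  have hs : 2 ^ (e + 2) = ∑ k ∈ range (e + 2 + 1), Nat.choose (e+2) k := (Nat.sum_range_choose _).symm
  rw [Finset.sum_range_succ, Finset.sum_range_succ'] at hs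
  have hmid : ∑ k ∈ range (e + 1), Nat.choose (e+2) (k+1) ≤ (e+1) * C := by
    calc ∑ k ∈ range (e + 1), Nat.choose (e+2) (k+1) ≤ (range (e+1)).card • C := by
          apply Finset.sum_le_card_nsmul
          intro x _; exact Nat.choose_le_middle _ _
      _ = (e+1) * C := by simp [smul_eq_mul]
  simp [Nat.choose_self, Nat.choose_zero_right] at hs
  nlinarith [hs, hmid, hC2]


section key
variable (d : ℕ) (φ : ℝ) (dHat : ℕ) (m : ℕ → ℝ)

lemma m_nonneg (hd : 2 ≤ d) (hφ : 2 * d ≤ φ) (h0 : m 0 = 0)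
    (hrec : ∀ i, 1 ≤ i → m i = (1 / (φ - d)) * ∑ l ∈ Finset.range i, (m l * (φ + d) + d)) :
    ∀ i, 0 ≤ m i := by
  have hd0 : (0:ℝ) < d := by exact_mod_cast (by omega : 0 < d)
  have hφd : (0:ℝ) < φ - d := by nlinarith
  intro i
  induction i using Nat.strong_induction_on with
  | _ i ih =>
    rcases Nat.eq_zero_or_pos i with h | h
    · simp [h, h0]
    · rw [hrec i h]
      apply mul_nonneg (by positivity)
      apply Finset.sum_nonneg
      intro l hl
      have := ih l (Finset.mem_range.mp hl)
      nlinarith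

lemma key_ineq (hd : 2 ≤ d) (hφ : 2 * d ≤ φ) (hd1 : 1 ≤ dHat) (hd2 : dHat + 1 ≤ d)
    (h0 : m 0 = 0)
    (hrec : ∀ i, 1 ≤ i → m i = (1 / (φ - d)) * ∑ l ∈ Finset.range i, (m l * (φ + d) + d))
    (t : ℕ) :
    (∑ g ∈ Finset.range t, (m (g+1) + dHat * (⌈m (g+1)⌉ : ℝ) / φ))
      + (dHat + 1) * (⌈m (t+1)⌉ : ℝ) / φ ≤ m (t+1) := by
  have hd0 : (0:ℝ) < d := by exact_mod_cast (by omega : 0 < d)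
  have hφ0 : (0:ℝ) < φ := by nlinarith
  have hφd : (0:ℝ) < φ - d := by nlinarith
  have hmnn := m_nonneg d φ m hd hφ h0 hrec
  -- the recursion in multiplied form
  have hsum : (φ - d) * m (t+1) = (∑ g ∈ Finset.range t, (m (g+1) * (φ + d) + d)) + d := by
    rw [hrec (t+1) (by omega), Finset.sum_range_succ']
    field_simp
    rw [h0]; ring_nf
    congr 1
    apply Finset.sum_congr rfl
    intro x _
    ring
  -- φ-scaled inequality
  have hscaled : (∑ g ∈ Finset.range t, (φ * m (g+1) + dHat * (⌈m (g+1)⌉ : ℝ)))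
      + (dHat + 1) * (⌈m (t+1)⌉ : ℝ) ≤ φ * m (t+1) := by
    have hdHd : (dHat : ℝ) ≤ d := by exact_mod_cast (by omega : dHat ≤ d)
    have hdH1d : (dHat : ℝ) + 1 ≤ d := by exact_mod_cast (by exact_mod_cast hd2 : ((dHat + 1 : ℕ) : ℝ) ≤ d)
    have hterm : ∀ g ∈ Finset.range t,
        φ * m (g+1) + dHat * (⌈m (g+1)⌉ : ℝ) ≤ m (g+1) * (φ + d) + d := by
      intro g _
      have hc : (⌈m (g+1)⌉ : ℝ) ≤ m (g+1) + 1 := (Int.ceil_lt_add_one _).le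
      have := hmnn (g+1)
      nlinarith
    have h1 : (∑ g ∈ Finset.range t, (φ * m (g+1) + dHat * (⌈m (g+1)⌉ : ℝ)))
        ≤ ∑ g ∈ Finset.range t, (m (g+1) * (φ + d) + d) := Finset.sum_le_sum hterm
    have hc : (⌈m (t+1)⌉ : ℝ) ≤ m (t+1) + 1 := (Int.ceil_lt_add_one _).le
    have hcnn : (0:ℝ) ≤ (⌈m (t+1)⌉ : ℝ) := by
      have := hmnn (t+1); positivity
    have h2 : (dHat + 1) * (⌈m (t+1)⌉ : ℝ) ≤ d * (m (t+1) + 1) := by nlinarith [hmnn (t+1)]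
    nlinarith [hmnn (t+1)]
  -- divide by φ
  have lhs_eq : (∑ g ∈ Finset.range t, (m (g+1) + dHat * (⌈m (g+1)⌉ : ℝ) / φ))
      + (dHat + 1) * (⌈m (t+1)⌉ : ℝ) / φ
      = ((∑ g ∈ Finset.range t, (φ * m (g+1) + dHat * (⌈m (g+1)⌉ : ℝ)))
        + (dHat + 1) * (⌈m (t+1)⌉ : ℝ)) / φ := by
    rw [add_div, Finset.sum_div]
    congr 1
    apply Finset.sum_congr rfl
    intro g _
    field_simp
  rw [lhs_eq, div_le_iff₀ hφ0]
  linarith [hscaled]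
end key



lemma core_lemma (d nq dHat : ℕ) (φ : ℝ) (m : ℕ → ℝ)
    (hφ0 : (0:ℝ) < φ)
    (hdH1 : (1:ℝ) ≤ (dHat:ℝ))
    (hmnn : ∀ i, 0 ≤ m i)
    (hkey : ∀ t, (∑ g ∈ Finset.range t, (m (g+1) + dHat * (⌈m (g+1)⌉ : ℝ) / φ))
      + (dHat + 1) * (⌈m (t+1)⌉ : ℝ) / φ ≤ m (t+1))
    (q : Fin nq × Fin d → Fin d → ℝ)
    (hq : ∀ (i : Fin nq) (j : Fin d),
      q (i, j) j ∈ Set.Ioc (m ((i : ℕ) + 1) - (⌈m ((i : ℕ) + 1)⌉ : ℝ) / φ)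
        (m ((i : ℕ) + 1)) ∧
      ∀ k : Fin d, k ≠ j →
        q (i, j) k ∈ Set.Icc 0 ((⌈m ((i : ℕ) + 1)⌉ : ℝ) / φ))
    (s s' : Fin nq × Fin d → Bool)
    (hT : ∀ i, (Finset.univ.filter fun j : Fin d => s (i, j)).card = dHat)
    (hT' : ∀ i, (Finset.univ.filter fun j : Fin d => s' (i, j)).card = 0 ∨
      (Finset.univ.filter fun j : Fin d => s' (i, j)).card = dHat)
    (hne : s' ≠ s) :
    ∃ j : Fin d, totalVal (fun x => q x j) s' < totalVal (fun x => q x j) s := by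
  set T : Fin nq → Finset (Fin d) := fun i => Finset.univ.filter fun j : Fin d => s (i, j) with hTdef
  set T' : Fin nq → Finset (Fin d) := fun i => Finset.univ.filter fun j : Fin d => s' (i, j) with hT'def
  have hdHpos : 1 ≤ dHat := by exact_mod_cast hdH1
  -- ceil facts
  have hceil_nn : ∀ t : ℕ, (0:ℝ) ≤ (⌈m t⌉ : ℝ) := by
    intro t
    have := hmnn t
    exact_mod_cast Int.ceil_nonneg this
  have hMge : ∀ t : ℕ, (⌈m (t+1)⌉ : ℝ) / φ ≤ m (t+1) := by
    intro t
    have hk := hkey t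
    have h1 : 0 ≤ ∑ g ∈ Finset.range t, (m (g+1) + dHat * (⌈m (g+1)⌉ : ℝ) / φ) := by
      apply Finset.sum_nonneg
      intro g _
      have := hmnn (g+1)
      have := hceil_nn (g+1)
      positivity
    have hx : (0:ℝ) ≤ (⌈m (t+1)⌉ : ℝ) / φ := by
      have := hceil_nn (t+1); positivity
    have h2 : (dHat + 1 : ℝ) * (⌈m (t+1)⌉ : ℝ) / φ = (dHat+1) * ((⌈m (t+1)⌉ : ℝ)/φ) := by ring
    have h3 : (⌈m (t+1)⌉ : ℝ)/φ ≤ (dHat+1) * ((⌈m (t+1)⌉ : ℝ)/φ) :=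
      le_mul_of_one_le_left hx (by linarith)
    linarith
  -- existence of differing group
  have hnonU : ∃ i, T' i ≠ T i := by
    by_contra h
    push_neg at h
    apply hne
    funext x
    obtain ⟨i, j⟩ := x
    have hj : (j ∈ T' i) ↔ (j ∈ T i) := by rw [h i]
    simp only [hTdef, hT'def, Finset.mem_filter, Finset.mem_univ, true_and] at hj
    cases hs' : s' (i, j) <;> cases hs : s (i, j) <;> simp_all
  classical
  set D : Finset (Fin nq) := Finset.univ.filter (fun i => T' i ≠ T i) with hDdef
  have hDne : D.Nonempty := by
    obtain ⟨i, hi⟩ := hnonU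
    exact ⟨i, by simp [hDdef, hi]⟩
  set istar := D.max' hDne with histardef
  have histar : T' istar ≠ T istar := by
    have := D.max'_mem hDne
    simpa [hDdef] using this
  have hgt : ∀ i, istar < i → T' i = T i := by
    intro i hi
    by_contra h
    have hmem : i ∈ D := by simp [hDdef, h]
    exact absurd (D.le_max' i hmem) (not_le.mpr hi)
  -- pick j in T istar \ T' istar
  have hjex : ∃ j, j ∈ T istar ∧ j ∉ T' istar := by
    rcases hT' istar with hc | hc
    · have hTe : T' istar = ∅ := Finset.card_eq_zero.mp hc
      have hTne : (T istar).Nonempty := by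
        rw [← Finset.card_pos, hT istar]; omega
      obtain ⟨j, hj⟩ := hTne
      exact ⟨j, hj, by simp [hTe]⟩
    · by_contra h
      push_neg at h
      have hsub : T istar ⊆ T' istar := fun j hj => h j hj
      have : T istar = T' istar :=
        Finset.eq_of_subset_of_card_le hsub (by rw [hT istar, hc])
      exact histar this.symm
  obtain ⟨j, hjT, hjT'⟩ := hjex
  refine ⟨j, ?_⟩
  -- rewrite totalVal as double sum over filters
  have hPs : ∀ s₀ : Fin nq × Fin d → Bool, totalVal (fun x => q x j) s₀
      = ∑ i : Fin nq, ∑ k ∈ Finset.univ.filter (fun k => s₀ (i, k)), q (i, k) j := by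
    intro s₀
    rw [totalVal, Fintype.sum_prod_type]
    exact Finset.sum_congr rfl fun i _ => (Finset.sum_filter _ _).symm
  set M : Fin nq → ℝ := fun i => m ((i:ℕ) + 1) with hMdef
  set A : Fin nq → ℝ := fun i => ∑ k ∈ T i, q (i, k) j with hAdef
  set A' : Fin nq → ℝ := fun i => ∑ k ∈ T' i, q (i, k) j with hA'def
  -- q bounds
  have hqub : ∀ (i : Fin nq) (k : Fin d),
      q (i, k) j ≤ if k = j then M i else (⌈M i⌉ : ℝ) / φ := by
    intro i k
    by_cases hkj : k = j
    · subst hkj; simpa [hMdef] using (hq i k).1.2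
    · simp only [hkj, if_false]
      exact ((hq i k).2 j (fun hh => hkj hh.symm)).2
  have hqnn : ∀ (i : Fin nq) (k : Fin d), 0 ≤ q (i, k) j := by
    intro i k
    by_cases hkj : k = j
    · subst hkj
      have h1 := (hq i k).1.1
      have h2 := hMge (i:ℕ)
      linarith
    · exact ((hq i k).2 j (fun hh => hkj hh.symm)).1
  -- upper bound on A'
  have hA'le : ∀ i, A' i ≤ (if j ∈ T' i then M i - (⌈M i⌉:ℝ)/φ else 0)
      + ((T' i).card : ℝ) * ((⌈M i⌉:ℝ)/φ) := by
    intro i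
    have h1 : A' i ≤ ∑ k ∈ T' i,
        ((if k = j then M i - (⌈M i⌉:ℝ)/φ else 0) + (⌈M i⌉:ℝ)/φ) := by
      apply Finset.sum_le_sum
      intro k hk
      have := hqub i k
      by_cases hkj : k = j <;> simp only [hkj, if_true, if_false] at this ⊢ <;> linarith
    rw [Finset.sum_add_distrib, Finset.sum_ite_eq' (T' i) j] at h1
    simpa [Finset.sum_const, nsmul_eq_mul, mul_comm] using h1
  have hAnn : ∀ i, 0 ≤ A i := fun i => Finset.sum_nonneg fun k _ => hqnn i k
  have hcard' : ∀ i, ((T' i).card : ℝ) ≤ dHat := by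
    intro i
    rcases hT' i with h | h <;> rw [h] <;> simp
  have hcnφ : ∀ i : Fin nq, (0:ℝ) ≤ (⌈M i⌉:ℝ)/φ := by
    intro i
    have := hceil_nn ((i:ℕ)+1)
    simp only [hMdef]
    positivity
  -- group bounds
  have hlt : ∀ i : Fin nq, A' i - A i ≤ M i + dHat * ((⌈M i⌉:ℝ)/φ) := by
    intro i
    have h1 := hA'le i
    have h2 := hAnn i
    have h3 := hcard' i
    have h4 := hcnφ i
    have h5 : 0 ≤ M i := hmnn _
    by_cases hj' : j ∈ T' i <;> simp only [hj', if_true, if_false] at h1 <;> nlinarith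
  have hAistar : M istar - (⌈M istar⌉:ℝ)/φ < A istar := by
    have h1 : q (istar, j) j ≤ A istar :=
      Finset.single_le_sum (fun k _ => hqnn istar k) hjT
    have h2 := (hq istar j).1.1
    simp only [hMdef]
    linarith
  have hA'istar : A' istar ≤ dHat * ((⌈M istar⌉:ℝ)/φ) := by
    have h1 := hA'le istar
    rw [if_neg hjT'] at h1
    have h3 := hcard' istar
    have h4 := hcnφ istar
    nlinarith
  -- split the sum
  have hz : ∑ i ∈ Finset.univ.filter (fun i => istar < i), (A' i - A i) = 0 :=
    Finset.sum_eq_zero fun i hi => by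
      have := hgt i (by simpa using hi)
      simp [hAdef, hA'def, this]
  have hins : Finset.univ.filter (fun i : Fin nq => ¬ i < istar)
      = insert istar (Finset.univ.filter fun i => istar < i) := by
    ext i
    simp only [Finset.mem_filter, Finset.mem_univ, true_and, Finset.mem_insert, not_lt]
    constructor
    · intro h
      rcases eq_or_lt_of_le h with h' | h'
      · exact Or.inl h'.symm
      · exact Or.inr h'
    · rintro (rfl | h)
      · exact le_refl _
      · exact le_of_lt h
  have hsplit : ∑ i, (A' i - A i)
      = (∑ i ∈ Finset.univ.filter (fun i => i < istar), (A' i - A i))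
        + (A' istar - A istar) := by
    rw [← Finset.sum_filter_add_sum_filter_not Finset.univ (fun i => i < istar), hins,
      Finset.sum_insert (by simp), hz]
    ring
  -- bound the lower part and map to range
  have h4 : ∑ i ∈ Finset.univ.filter (fun i => i < istar), (A' i - A i)
      ≤ ∑ i ∈ Finset.univ.filter (fun i : Fin nq => i < istar),
          (M i + dHat * ((⌈M i⌉:ℝ)/φ)) :=
    Finset.sum_le_sum fun i _ => hlt i
  have hnq0 : 0 < nq := istar.pos
  have h5 : ∑ i ∈ Finset.univ.filter (fun i : Fin nq => i < istar),
        (M i + dHat * ((⌈M i⌉:ℝ)/φ))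
      = ∑ g ∈ Finset.range (istar:ℕ), (m (g+1) + dHat * (⌈m (g+1)⌉:ℝ)/φ) := by
    apply Finset.sum_nbij' (fun i : Fin nq => (i:ℕ))
      (fun g => (⟨g % nq, Nat.mod_lt g hnq0⟩ : Fin nq))
    · intro a ha
      simp only [Finset.mem_filter, Finset.mem_univ, true_and, Fin.lt_def] at ha
      exact Finset.mem_range.mpr ha
    · intro g hg
      simp only [Finset.mem_range] at hg
      have hglt : g < nq := hg.trans istar.isLt
      simp only [Finset.mem_filter, Finset.mem_univ, true_and, Fin.lt_def]
      simpa [Nat.mod_eq_of_lt hglt] using hg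
    · intro a ha
      apply Fin.ext
      simp [Nat.mod_eq_of_lt a.isLt]
    · intro g hg
      simp only [Finset.mem_range] at hg
      have hglt : g < nq := hg.trans istar.isLt
      simp [Nat.mod_eq_of_lt hglt]
    · intro a ha
      simp [hMdef, mul_div_assoc]
  have hk := hkey (istar:ℕ)
  have hstarbd : A' istar - A istar < (dHat+1) * ((⌈M istar⌉:ℝ)/φ) - M istar := by
    have h1 := hA'istar
    have h2 := hAistar
    have hx : (dHat + 1 : ℝ) * ((⌈M istar⌉:ℝ)/φ)
        = dHat * ((⌈M istar⌉:ℝ)/φ) + (⌈M istar⌉:ℝ)/φ := by ring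
    linarith
  have hsum_lt : ∑ i, (A' i - A i) < 0 := by
    rw [hsplit]
    have hMk : M istar = m ((istar:ℕ)+1) := rfl
    have hassoc : ∀ g, (dHat:ℝ) * (⌈m (g+1)⌉:ℝ)/φ = dHat * ((⌈m (g+1)⌉:ℝ)/φ) := by
      intro g; ring
    have hk2 : (∑ g ∈ Finset.range (istar:ℕ), (m (g+1) + dHat * (⌈m (g+1)⌉:ℝ)/φ))
        + (dHat + 1) * ((⌈M istar⌉:ℝ)/φ) ≤ M istar := by
      rw [hMk]
      have : (dHat + 1 : ℝ) * ((⌈m ((istar:ℕ)+1)⌉:ℝ)/φ) = (dHat + 1) * (⌈m ((istar:ℕ)+1)⌉:ℝ)/φ := by ring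
      rw [this]
      exact hk
    linarith [h4, hstarbd, h5.le, h5.ge, hk2]
  have hfin : (∑ i, A' i) - (∑ i, A i) < 0 := by
    rw [← Finset.sum_sub_distrib]
    exact hsum_lt
  rw [hPs s', hPs s]
  simp only [hA'def, hAdef, hT'def, hTdef] at hfin
  linarith


/-- In the setting of the multi-criteria copy construction
(objects `b_{i,j}` of weight `2^i/d̂` with profit vectors in `Q_{i,j}`, solution set
`S = Ŝ^{n_q}`), the number of Pareto optimal solutions is at least `(2^d/d)^{n_q}`. -/
theorem pareto_count_lower_bound (d : ℕ) (hd : 2 ≤ d) (φ : ℝ)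
    (hφ : 2 * d ≤ φ) (nq : ℕ) (hnq : 1 ≤ nq)
    (dHat : ℕ) (hdHat : (dHat : ℤ) = ⌈(d : ℚ) / 2⌉)
    (m : ℕ → ℝ) (h0 : m 0 = 0)
    (hrec : ∀ i, 1 ≤ i →
      m i = (1 / (φ - d)) * ∑ l ∈ Finset.range i, (m l * (φ + d) + d))
    (q : Fin nq × Fin d → Fin d → ℝ)
    (hq : ∀ (i : Fin nq) (j : Fin d),
      q (i, j) j ∈ Set.Ioc (m ((i : ℕ) + 1) - (⌈m ((i : ℕ) + 1)⌉ : ℝ) / φ)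
        (m ((i : ℕ) + 1)) ∧
      ∀ k : Fin d, k ≠ j →
        q (i, j) k ∈ Set.Icc 0 ((⌈m ((i : ℕ) + 1)⌉ : ℝ) / φ))
    (S : Set (Fin nq × Fin d → Bool))
    (hS : S = {s | ∀ i : Fin nq,
      (Finset.univ.filter fun j : Fin d => s (i, j)).card = 0 ∨
      (Finset.univ.filter fun j : Fin d => s (i, j)).card = dHat}) :
    ((2 : ℝ) ^ d / d) ^ nq ≤
      ((paretoSetD S
          (fun x : Fin nq × Fin d => (2 : ℝ) ^ ((x.1 : ℕ) + 1) / dHat)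
          q).ncard : ℝ) := by
  classical
  have hd0 : (0:ℝ) < d := by exact_mod_cast (by omega : 0 < d)
  have hφ0 : (0:ℝ) < φ := by nlinarith
  obtain ⟨hl, hr⟩ := dHat_facts d hd dHat hdHat
  have hdH1 : 1 ≤ dHat := by omega
  have hdH2 : dHat + 1 ≤ d := by omega
  have hmnn := m_nonneg d φ m hd hφ h0 hrec
  have hkey := key_ineq d φ dHat m hd hφ hdH1 hdH2 h0 hrec
  set w : Fin nq × Fin d → ℝ := fun x => (2 : ℝ) ^ ((x.1 : ℕ) + 1) / dHat with hw
  -- the full solutions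
  have hfilter : ∀ (T : Fin nq → {t : Finset (Fin d) // t.card = dHat}) (i : Fin nq),
      (Finset.univ.filter fun j : Fin d => (fun x : Fin nq × Fin d => decide (x.2 ∈ (T x.1).1)) (i, j))
        = (T i).1 := by
    intro T i
    ext j
    simp
  have hmemS : ∀ T : Fin nq → {t : Finset (Fin d) // t.card = dHat},
      (fun x : Fin nq × Fin d => decide (x.2 ∈ (T x.1).1)) ∈ S := by
    intro T
    rw [hS]
    intro i
    right
    rw [hfilter T i]
    exact (T i).2
  have hpar : ∀ T : Fin nq → {t : Finset (Fin d) // t.card = dHat},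
      (fun x : Fin nq × Fin d => decide (x.2 ∈ (T x.1).1)) ∈ paretoSetD S w q := by
    intro T
    set sT : Fin nq × Fin d → Bool := fun x => decide (x.2 ∈ (T x.1).1) with hsT
    refine ⟨hmemS T, ?_⟩
    intro s' hs' hdom
    by_cases hss : s' = sT
    · subst hss
      rcases hdom.2.2 with h | ⟨j, h⟩ <;> exact lt_irrefl _ h
    · have hT'c : ∀ i, (Finset.univ.filter fun j : Fin d => s' (i, j)).card = 0 ∨
          (Finset.univ.filter fun j : Fin d => s' (i, j)).card = dHat := by
        rw [hS] at hs'; exact hs'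
      have hTc : ∀ i, (Finset.univ.filter fun j : Fin d => sT (i, j)).card = dHat := by
        intro i
        rw [hfilter T i]
        exact (T i).2
      obtain ⟨j, hj⟩ := core_lemma d nq dHat φ m hφ0
        (by exact_mod_cast hdH1) hmnn hkey q hq sT s' hTc hT'c hss
      exact absurd (hdom.2.1 j) (not_le.mpr hj)
  -- injection into the Pareto set
  set F : (Fin nq → {t : Finset (Fin d) // t.card = dHat}) → (paretoSetD S w q) :=
    fun T => ⟨fun x : Fin nq × Fin d => decide (x.2 ∈ (T x.1).1), hpar T⟩ with hF
  have hFinj : Function.Injective F := by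
    intro T T' hTT
    have heq : (fun x : Fin nq × Fin d => decide (x.2 ∈ (T x.1).1))
        = (fun x : Fin nq × Fin d => decide (x.2 ∈ (T' x.1).1)) := congrArg Subtype.val hTT
    funext i
    apply Subtype.ext
    have h1 := hfilter T i
    have h2 := hfilter T' i
    rw [← h1, ← h2]
    ext j
    have hj := congrFun heq (i, j)
    simp only [decide_eq_decide] at hj
    simp [hj]
  have hcard1 : Nat.card (Fin nq → {t : Finset (Fin d) // t.card = dHat})
      = (Nat.choose d dHat) ^ nq := by
    rw [Nat.card_fun]
    rw [Nat.card_eq_fintype_card, Nat.card_eq_fintype_card]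
    rw [Fintype.card_finset_len, Fintype.card_fin, Fintype.card_fin]
  have hle : (Nat.choose d dHat) ^ nq ≤ (paretoSetD S w q).ncard := by
    rw [← hcard1, ← Nat.card_coe_set_eq]
    exact Nat.card_le_card_of_injective F hFinj
  have hbase : (2:ℝ)^d/d ≤ (Nat.choose d dHat : ℝ) := by
    rw [div_le_iff₀ hd0]
    have := choose_bound d hd dHat hdHat
    have h2 : ((2^d : ℕ) : ℝ) ≤ ((d * Nat.choose d dHat : ℕ) : ℝ) := by exact_mod_cast this
    push_cast at h2
    linarith
  calc ((2 : ℝ) ^ d / d) ^ nq ≤ ((Nat.choose d dHat : ℝ)) ^ nq :=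
        pow_le_pow_left₀ (by positivity) hbase nq
    _ = (((Nat.choose d dHat) ^ nq : ℕ) : ℝ) := by push_cast; ring
    _ ≤ _ := by exact_mod_cast Nat.cast_le.mpr hle
end
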